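/- arXiv:1107.3540 — 9 statements merged into one kernel-verified Lean document; each statement's English description precedes it below -/
import Mathlib

section
/- Let v : ℝ × ℝ → ℝ be a smooth function of (x,t) and define u = v_x + v². Then at every point, u_t − 6·u·u_x + u_{xxx} = 2v·(v_t − 6v²v_x + v_{xxx}) + ∂_x(v_t − 6v²v_x + v_{xxx}); that is, under Miura's transformation u = v_x + v², the KdV expression for u factors as (2v + ∂/∂x) applied to the mKdV expression for v. -/
/-- Partial derivative in the first (spatial) variable. -/
noncomputable def px (f : ℝ → ℝ → ℝ) : ℝ → ℝ → ℝ :=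
  fun x t => deriv (fun y => f y t) x

/-- Partial derivative in the second (time) variable. -/
noncomputable def pt (f : ℝ → ℝ → ℝ) : ℝ → ℝ → ℝ :=
  fun x t => deriv (fun s => f x s) t

/-- Third partial derivative in the first (spatial) variable. -/
noncomputable def pxxx (f : ℝ → ℝ → ℝ) : ℝ → ℝ → ℝ :=
  fun x t => iteratedDeriv 3 (fun y => f y t) x

namespace MiuraAux

/-- Directional derivative of a function on the plane. -/
noncomputable def Dv (w : ℝ × ℝ) (G : ℝ × ℝ → ℝ) : ℝ × ℝ → ℝ :=
  fun p => fderiv ℝ G p w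

lemma Dv_smooth (w : ℝ × ℝ) {G : ℝ × ℝ → ℝ} (hG : ContDiff ℝ (⊤ : ℕ∞) G) :
    ContDiff ℝ (⊤ : ℕ∞) (Dv w G) :=
  (hG.fderiv_right (by simp)).clm_apply contDiff_const

lemma hasDerivAt_slice_x {G : ℝ × ℝ → ℝ} (hG : ContDiff ℝ (⊤ : ℕ∞) G) (x t : ℝ) :
    HasDerivAt (fun y => G (y, t)) (Dv (1, 0) G (x, t)) x := by
  have h1 : HasDerivAt (fun y : ℝ => ((y, t) : ℝ × ℝ)) ((1 : ℝ), (0 : ℝ)) x :=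
    (hasDerivAt_id x).prodMk (hasDerivAt_const x t)
  exact ((hG.differentiable (by simp) (x, t)).hasFDerivAt).comp_hasDerivAt x h1

lemma hasDerivAt_slice_t {G : ℝ × ℝ → ℝ} (hG : ContDiff ℝ (⊤ : ℕ∞) G) (x t : ℝ) :
    HasDerivAt (fun s => G (x, s)) (Dv (0, 1) G (x, t)) t := by
  have h1 : HasDerivAt (fun s : ℝ => ((x, s) : ℝ × ℝ)) ((0 : ℝ), (1 : ℝ)) t :=
    (hasDerivAt_const t x).prodMk (hasDerivAt_id t)
  exact ((hG.differentiable (by simp) (x, t)).hasFDerivAt).comp_hasDerivAt t h1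

lemma px_curry {G : ℝ × ℝ → ℝ} (hG : ContDiff ℝ (⊤ : ℕ∞) G) (x t : ℝ) :
    px (fun a b => G (a, b)) x t = Dv (1, 0) G (x, t) :=
  (hasDerivAt_slice_x hG x t).deriv

lemma pt_curry {G : ℝ × ℝ → ℝ} (hG : ContDiff ℝ (⊤ : ℕ∞) G) (x t : ℝ) :
    pt (fun a b => G (a, b)) x t = Dv (0, 1) G (x, t) :=
  (hasDerivAt_slice_t hG x t).deriv

lemma pxxx_curry {G : ℝ × ℝ → ℝ} (hG : ContDiff ℝ (⊤ : ℕ∞) G) (x t : ℝ) :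
    pxxx (fun a b => G (a, b)) x t = Dv (1, 0) (Dv (1, 0) (Dv (1, 0) G)) (x, t) := by
  have e1 : deriv (fun y => G (y, t)) = fun y => Dv (1, 0) G (y, t) :=
    funext fun y => (hasDerivAt_slice_x hG y t).deriv
  have e2 : deriv (fun y => Dv (1, 0) G (y, t)) = fun y => Dv (1, 0) (Dv (1, 0) G) (y, t) :=
    funext fun y => (hasDerivAt_slice_x (Dv_smooth _ hG) y t).deriv
  have e3 : deriv (fun y => Dv (1, 0) (Dv (1, 0) G) (y, t))
      = fun y => Dv (1, 0) (Dv (1, 0) (Dv (1, 0) G)) (y, t) :=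
    funext fun y => (hasDerivAt_slice_x (Dv_smooth _ (Dv_smooth _ hG)) y t).deriv
  show iteratedDeriv 3 (fun y => G (y, t)) x = _
  rw [show (3 : ℕ) = 2 + 1 from rfl, iteratedDeriv_succ,
    show (2 : ℕ) = 1 + 1 from rfl, iteratedDeriv_succ, iteratedDeriv_one, e1, e2, e3]

lemma Dv_eval_snd {G : ℝ × ℝ → ℝ} (hG : ContDiff ℝ (⊤ : ℕ∞) G) (w₁ w₂ : ℝ × ℝ) (p : ℝ × ℝ) :
    Dv w₁ (Dv w₂ G) p = fderiv ℝ (fderiv ℝ G) p w₁ w₂ := by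
  have hdf : Differentiable ℝ (fderiv ℝ G) := (hG.fderiv_right (m := 1) (WithTop.coe_le_coe.mpr le_top)).differentiable (by simp)
  have h : HasFDerivAt (Dv w₂ G)
      ((ContinuousLinearMap.apply ℝ ℝ w₂).comp (fderiv ℝ (fderiv ℝ G) p)) p :=
    (ContinuousLinearMap.apply ℝ ℝ w₂).hasFDerivAt.comp p (hdf p).hasFDerivAt
  have := h.fderiv
  simp only [Dv, this, ContinuousLinearMap.coe_comp', Function.comp_apply,
    ContinuousLinearMap.apply_apply]

lemma Dv_comm {G : ℝ × ℝ → ℝ} (hG : ContDiff ℝ (⊤ : ℕ∞) G) (w₁ w₂ : ℝ × ℝ) :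
    Dv w₁ (Dv w₂ G) = Dv w₂ (Dv w₁ G) := by
  funext p
  rw [Dv_eval_snd hG w₁ w₂ p, Dv_eval_snd hG w₂ w₁ p]
  have hdf : Differentiable ℝ (fderiv ℝ G) := (hG.fderiv_right (m := 1) (WithTop.coe_le_coe.mpr le_top)).differentiable (by simp)
  exact second_derivative_symmetric
    (fun y => (hG.differentiable (by simp) y).hasFDerivAt) (hdf p).hasFDerivAt w₁ w₂

lemma Dv_add {f g : ℝ × ℝ → ℝ} (w p) (hf : DifferentiableAt ℝ f p)
    (hg : DifferentiableAt ℝ g p) :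
    Dv w (fun q => f q + g q) p = Dv w f p + Dv w g p := by
  simp [Dv, fderiv_fun_add hf hg]

lemma Dv_sub {f g : ℝ × ℝ → ℝ} (w p) (hf : DifferentiableAt ℝ f p)
    (hg : DifferentiableAt ℝ g p) :
    Dv w (fun q => f q - g q) p = Dv w f p - Dv w g p := by
  simp [Dv, fderiv_fun_sub hf hg]

lemma Dv_mul {f g : ℝ × ℝ → ℝ} (w p) (hf : DifferentiableAt ℝ f p)
    (hg : DifferentiableAt ℝ g p) :
    Dv w (fun q => f q * g q) p = f p * Dv w g p + g p * Dv w f p := by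
  simp [Dv, fderiv_fun_mul hf hg]

lemma Dv_const_mul {f : ℝ × ℝ → ℝ} (w p) (hf : DifferentiableAt ℝ f p) (c : ℝ) :
    Dv w (fun q => c * f q) p = c * Dv w f p := by
  simp [Dv, fderiv_const_mul hf c]

lemma Dv_sq {f : ℝ × ℝ → ℝ} (w p) (hf : DifferentiableAt ℝ f p) :
    Dv w (fun q => f q ^ 2) p = 2 * f p * Dv w f p := by
  have h : (fun q => f q ^ 2) = fun q => f q * f q := by funext q; ring
  rw [h, Dv_mul w p hf hf]; ring

end MiuraAux

open MiuraAux in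
/-- Miura's transformation: if `u = v_x + v²`, then the KdV expression for `u`
factors as `(2v + ∂/∂x)` applied to the mKdV expression for `v`. -/
theorem miura_factorization (v : ℝ → ℝ → ℝ)
    (hv : ContDiff ℝ (⊤ : ℕ∞) (Function.uncurry v))
    (u : ℝ → ℝ → ℝ) (hu : u = fun x t => px v x t + (v x t) ^ 2)
    (E : ℝ → ℝ → ℝ)
    (hE : E = fun x t => pt v x t - 6 * (v x t) ^ 2 * px v x t + pxxx v x t) :
    ∀ x t : ℝ,
      pt u x t - 6 * u x t * px u x t + pxxx u x t
        = 2 * v x t * E x t + px E x t := by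
  intro x t
  set F : ℝ × ℝ → ℝ := Function.uncurry v with hFdef
  have hF : ContDiff ℝ (⊤ : ℕ∞) F := hv
  set e1 : ℝ × ℝ := (1, 0)
  set e2 : ℝ × ℝ := (0, 1)
  -- basic derived functions
  set A1 : ℝ × ℝ → ℝ := Dv e1 F with hA1
  set A2 : ℝ × ℝ → ℝ := Dv e1 A1 with hA2
  set A3 : ℝ × ℝ → ℝ := Dv e1 A2 with hA3
  set T : ℝ × ℝ → ℝ := Dv e2 F with hT
  have hA1s : ContDiff ℝ (⊤ : ℕ∞) A1 := Dv_smooth _ hF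
  have hA2s : ContDiff ℝ (⊤ : ℕ∞) A2 := Dv_smooth _ hA1s
  have hA3s : ContDiff ℝ (⊤ : ℕ∞) A3 := Dv_smooth _ hA2s
  have hTs : ContDiff ℝ (⊤ : ℕ∞) T := Dv_smooth _ hF
  -- v and its partials as curried functions
  have hv' : v = fun a b => F (a, b) := rfl
  have hpx : px v = fun a b => A1 (a, b) := by
    funext a b; exact px_curry hF a b
  have hpt : pt v = fun a b => T (a, b) := by
    funext a b; exact pt_curry hF a b
  have hpxxx : pxxx v = fun a b => A3 (a, b) := by
    funext a b; exact pxxx_curry hF a b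
  -- functions G (for u) and H (for E)
  set G : ℝ × ℝ → ℝ := fun p => A1 p + F p ^ 2 with hGdef
  have hGs : ContDiff ℝ (⊤ : ℕ∞) G := hA1s.add (hF.pow 2)
  have hu' : u = fun a b => G (a, b) := by
    rw [hu, hpx]; rfl
  set H : ℝ × ℝ → ℝ := fun p => T p - 6 * F p ^ 2 * A1 p + A3 p with hHdef
  have hHs : ContDiff ℝ (⊤ : ℕ∞) H :=
    ((hTs.sub ((contDiff_const.mul (hF.pow 2)).mul hA1s)).add hA3s)
  have hE' : E = fun a b => H (a, b) := by
    rw [hE, hpx, hpt, hpxxx]; rfl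
  -- Expansions of derivatives of G
  have dG1 : Dv e1 G = fun p => A2 p + 2 * F p * A1 p := by
    funext p
    rw [hGdef]
    rw [Dv_add e1 p (hA1s.differentiable (by simp) p) ((hF.pow 2).differentiable (by simp) p),
      Dv_sq e1 p (hF.differentiable (by simp) p)]
  have hdG1s : ContDiff ℝ (⊤ : ℕ∞) (Dv e1 G) := Dv_smooth _ hGs
  have dG2 : Dv e1 (Dv e1 G) = fun p => A3 p + 2 * (A1 p * A1 p + F p * A2 p) := by
    funext p
    rw [dG1]
    have h2 : (fun p => A2 p + 2 * F p * A1 p)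
        = fun p => A2 p + 2 * (F p * A1 p) := by funext q; ring
    rw [h2, Dv_add e1 p (hA2s.differentiable (by simp) p)
        ((contDiff_const.mul (hF.mul hA1s)).differentiable (by simp) p),
      Dv_const_mul e1 p ((hF.mul hA1s).differentiable (by simp) p),
      Dv_mul e1 p (hF.differentiable (by simp) p) (hA1s.differentiable (by simp) p)]
    ring
  have hdG2s : ContDiff ℝ (⊤ : ℕ∞) (Dv e1 (Dv e1 G)) := Dv_smooth _ hdG1s
  have dG3 : Dv e1 (Dv e1 (Dv e1 G)) (x, t)
      = Dv e1 A3 (x, t) + 2 * (2 * A1 (x, t) * A2 (x, t)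
        + (A1 (x, t) * A2 (x, t) + F (x, t) * A3 (x, t))) := by
    rw [dG2]
    have h2 : (fun p => A3 p + 2 * (A1 p * A1 p + F p * A2 p))
        = fun p => A3 p + 2 * (A1 p * A1 p + F p * A2 p) := rfl
    rw [Dv_add e1 (x, t) (hA3s.differentiable (by simp) _)
        ((contDiff_const.mul ((hA1s.mul hA1s).add (hF.mul hA2s))).differentiable (by simp) _),
      Dv_const_mul e1 (x, t) (((hA1s.mul hA1s).add (hF.mul hA2s)).differentiable (by simp) _),
      Dv_add e1 (x, t) ((hA1s.mul hA1s).differentiable (by simp) _)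
        ((hF.mul hA2s).differentiable (by simp) _),
      Dv_mul e1 (x, t) (hA1s.differentiable (by simp) _) (hA1s.differentiable (by simp) _),
      Dv_mul e1 (x, t) (hF.differentiable (by simp) _) (hA2s.differentiable (by simp) _)]
    ring
  have dG2t : Dv e2 G (x, t) = Dv e2 A1 (x, t) + 2 * F (x, t) * T (x, t) := by
    rw [hGdef]
    rw [Dv_add e2 (x, t) (hA1s.differentiable (by simp) _)
        ((hF.pow 2).differentiable (by simp) _),
      Dv_sq e2 (x, t) (hF.differentiable (by simp) _)]
  -- Expansion of derivative of H
  have dH : Dv e1 H (x, t) = Dv e1 T (x, t)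
      - 6 * (2 * F (x, t) * A1 (x, t) * A1 (x, t) + F (x, t) ^ 2 * A2 (x, t))
      + Dv e1 A3 (x, t) := by
    rw [hHdef]
    have h2 : (fun p => T p - 6 * F p ^ 2 * A1 p + A3 p)
        = fun p => (T p - 6 * (F p ^ 2 * A1 p)) + A3 p := by funext q; ring
    rw [h2, Dv_add e1 (x, t)
        ((hTs.sub (contDiff_const.mul ((hF.pow 2).mul hA1s))).differentiable (by simp) _)
        (hA3s.differentiable (by simp) _),
      Dv_sub e1 (x, t) (hTs.differentiable (by simp) _)
        ((contDiff_const.mul ((hF.pow 2).mul hA1s)).differentiable (by simp) _),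
      Dv_const_mul e1 (x, t) (((hF.pow 2).mul hA1s).differentiable (by simp) _),
      Dv_mul e1 (x, t) ((hF.pow 2).differentiable (by simp) _) (hA1s.differentiable (by simp) _),
      Dv_sq e1 (x, t) (hF.differentiable (by simp) _)]
    ring
  -- Clairaut: mixed partials commute
  have comm1 : Dv e2 A1 = Dv e1 T := by
    rw [hA1, hT]; exact Dv_comm hF e2 e1
  -- Put everything together
  rw [hu', hE',
    pt_curry hGs x t, px_curry hGs x t, pxxx_curry hGs x t, px_curry hHs x t,
    dG3, dG2t, dG1, dH, comm1]
  have hvF : ∀ a b : ℝ, v a b = F (a, b) := fun a b => rfl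
  simp only [hGdef, hHdef, hvF]
  ring
end

section
/- For every real k ≠ 0, one has ξ(k) − ω(k)⁴ ≠ 0, and there exists a continuously differentiable function φ : ℝ → ℂ that is twice differentiable at every x ∉ {−b, 0} and satisfies −φ''(x) + V(x)φ(x) = k²φ(x) for all x ∉ {−b, 0}, together with φ(x) = T(k)e^{−ikx} for all x ≤ −b and φ(x) = e^{−ikx} + R(k)e^{ikx} for all x ≥ 0. (This exhibits R(k) and T(k) as the right reflection and transmission coefficients of the block potential V.) -/
open Complex

/-- `ω(k) = k/a + ((k/a)² + 1)^{1/2}` with the principal branch of the square root. -/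
noncomputable def omg (a : ℝ) (k : ℂ) : ℂ :=
  k / (a : ℂ) + ((k / (a : ℂ)) ^ 2 + 1) ^ ((1 : ℂ) / 2)

/-- `ξ(k) = exp(i·a·b·(ω(k) + 1/ω(k)))`. -/
noncomputable def xi (a b : ℝ) (k : ℂ) : ℂ :=
  Complex.exp (Complex.I * (a : ℂ) * (b : ℂ) * (omg a k + 1 / omg a k))

/-- Right reflection coefficient of the block potential `−a²·χ_{[−b,0]}`. -/
noncomputable def Rcoef (a b : ℝ) (k : ℂ) : ℂ :=
  omg a k ^ 2 * (1 - xi a b k) / (xi a b k - omg a k ^ 4)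

/-- Left reflection coefficient of the block potential `−a²·χ_{[−b,0]}`. -/
noncomputable def Lcoef (a b : ℝ) (k : ℂ) : ℂ :=
  Rcoef a b k * Complex.exp (-Complex.I * (a : ℂ) * (b : ℂ) * (omg a k - 1 / omg a k))

/-- Transmission coefficient of the block potential `−a²·χ_{[−b,0]}`. -/
noncomputable def Tcoef (a b : ℝ) (k : ℂ) : ℂ :=
  (1 - omg a k ^ 4) / (xi a b k - omg a k ^ 4) * Complex.exp (Complex.I * (a : ℂ) * (b : ℂ) / omg a k)

/-- The block (well) potential `V = −a²·χ_{[−b,0]}`, complex-valued. -/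
noncomputable def Vblock (a b : ℝ) (x : ℝ) : ℂ :=
  if -b ≤ x ∧ x ≤ 0 then -(a : ℂ) ^ 2 else 0

/-!
For real `k` the number `ω = ω(k)` is a positive real with `ω - ω⁻¹ = 2k/a`. Hence
`k = a(ω - ω⁻¹)/2`, and `κ = a(ω + ω⁻¹)/2` satisfies `κ² = k² + a²`. Since `ξ = e^{2iκb}` has
modulus one while `ω⁴ ≠ 1` for `k ≠ 0`, the denominator `ξ - ω⁴` does not vanish.

The Jost solution is `T e^{-ikx}` left of the well, `C e^{-iκx} + D e^{iκx}` inside it and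
`e^{-ikx} + R e^{ikx}` to its right. Matching values and derivatives at `0` and `-b` reduces in
every case to the identity `κ(1 - ω²) = -k(1 + ω²)`.
-/

open Filter Topology

section Order

variable {X α : Type*} [TopologicalSpace X] [LinearOrder X] [OrderClosedTopology X]
  {f g : X → α} {c x : X}

theorem ite_le_eventuallyEq_left (hx : x < c) :
    (fun y => if y ≤ c then f y else g y) =ᶠ[𝓝 x] f := by
  filter_upwards [Iio_mem_nhds hx] with y (hy : y < c)
  simp [hy.le]

theorem ite_le_eventuallyEq_right (hx : c < x) :
    (fun y => if y ≤ c then f y else g y) =ᶠ[𝓝 x] g := by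
  filter_upwards [Ioi_mem_nhds hx] with y (hy : c < y)
  simp [not_le.mpr hy]

end Order

section Gluing

variable {E : Type*} [NormedAddCommGroup E] [NormedSpace ℝ E] {f g f' g' : ℝ → E} {c : ℝ}

theorem hasDerivAt_ite_le (hf : ∀ y, HasDerivAt f (f' y) y) (hg : ∀ y, HasDerivAt g (g' y) y)
    (h₀ : f c = g c) (h₁ : f' c = g' c) (x : ℝ) :
    HasDerivAt (fun y => if y ≤ c then f y else g y) (if x ≤ c then f' x else g' x) x := by
  rcases lt_trichotomy x c with hx | rfl | hx
  · simpa [hx.le] using (hf x).congr_of_eventuallyEq (ite_le_eventuallyEq_left hx)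
  · have hle : HasDerivWithinAt (fun y => if y ≤ x then f y else g y) (f' x) (Set.Iic x) x :=
      (hf x).hasDerivWithinAt.congr (fun y hy => if_pos hy) (if_pos le_rfl)
    have hge : HasDerivWithinAt (fun y => if y ≤ x then f y else g y) (f' x) (Set.Ici x) x := by
      refine h₁ ▸ (hg x).hasDerivWithinAt.congr (fun y hy => ?_) (by simp [h₀])
      rcases (Set.mem_Ici.mp hy).eq_or_lt with rfl | h
      · simp [h₀]
      · simp [not_le.mpr h]
    simpa [Set.Iic_union_Ici, hasDerivWithinAt_univ] using hle.union hge
  · simpa [not_le.mpr hx] using (hg x).congr_of_eventuallyEq (ite_le_eventuallyEq_right hx)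

theorem contDiff_one_ite_le (hf : ContDiff ℝ 1 f) (hg : ContDiff ℝ 1 g)
    (h₀ : f c = g c) (h₁ : deriv f c = deriv g c) :
    ContDiff ℝ 1 (fun y => if y ≤ c then f y else g y) := by
  have hd := hasDerivAt_ite_le (fun y => (hf.differentiable one_ne_zero y).hasDerivAt)
    (fun y => (hg.differentiable one_ne_zero y).hasDerivAt) h₀ h₁
  rw [contDiff_one_iff_deriv]
  refine ⟨fun x => (hd x).differentiableAt, ?_⟩
  rw [show deriv _ = _ from funext fun x => (hd x).deriv]
  exact (hf.continuous_deriv le_rfl).if_le (hg.continuous_deriv le_rfl) continuous_id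
    continuous_const fun x hx => hx ▸ h₁

end Gluing

section PlaneWave

noncomputable def planeWave (q A B : ℂ) (x : ℝ) : ℂ :=
  A * exp (-I * q * x) + B * exp (I * q * x)

variable (q A B : ℂ)

@[simp]
theorem planeWave_zero : planeWave q A B 0 = A + B := by
  simp [planeWave]

theorem planeWave_neg (x : ℝ) :
    planeWave q A B (-x) = A * exp (I * q * x) + B * (exp (I * q * x))⁻¹ := by
  simp only [planeWave, ← exp_neg, ofReal_neg, mul_neg, neg_mul, neg_neg]

theorem hasDerivAt_planeWave (x : ℝ) :
    HasDerivAt (planeWave q A B) (planeWave q (-I * q * A) (I * q * B) x) x := by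
  have hx : HasDerivAt (fun y : ℝ => (y : ℂ)) 1 x := ofRealCLM.hasDerivAt
  have h₁ := ((hx.const_mul (-I * q)).cexp).const_mul A
  have h₂ := ((hx.const_mul (I * q)).cexp).const_mul B
  exact (h₁.add h₂).congr_deriv (by simp only [planeWave]; ring)

theorem contDiff_planeWave {n : WithTop ℕ∞} : ContDiff ℝ n (planeWave q A B) := by
  have h : ContDiff ℝ n (fun x : ℝ => (x : ℂ)) := ofRealCLM.contDiff
  unfold planeWave
  fun_prop

theorem deriv_planeWave : deriv (planeWave q A B) = planeWave q (-I * q * A) (I * q * B) :=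
  funext fun x => (hasDerivAt_planeWave q A B x).deriv

theorem deriv_deriv_planeWave (x : ℝ) :
    deriv (deriv (planeWave q A B)) x = -q ^ 2 * planeWave q A B x := by
  simp only [deriv_planeWave, planeWave]
  linear_combination (A * exp (-I * q * x) + B * exp (I * q * x)) * q ^ 2 * I_sq

variable {q A B} {φ : ℝ → ℂ} {x : ℝ}

theorem differentiableAt_deriv_of_eventuallyEq_planeWave (h : φ =ᶠ[𝓝 x] planeWave q A B) :
    DifferentiableAt ℝ (deriv φ) x := by
  rw [h.deriv.differentiableAt_iff, deriv_planeWave]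
  exact (hasDerivAt_planeWave _ _ _ x).differentiableAt

theorem schrodinger_of_eventuallyEq_planeWave {V k : ℂ} (h : φ =ᶠ[𝓝 x] planeWave q A B)
    (hq : q ^ 2 + V = k ^ 2) : -deriv (deriv φ) x + V * φ x = k ^ 2 * φ x := by
  rw [h.deriv.deriv_eq, deriv_deriv_planeWave, h.eq_of_nhds, ← hq]
  ring

end PlaneWave

theorem add_sqrt_sq_add_one_pos (t : ℝ) : 0 < t + √(t ^ 2 + 1) := by
  have h : |t| < √(t ^ 2 + 1) := (Real.lt_sqrt (abs_nonneg t)).2 (by rw [sq_abs]; linarith)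
  linarith [neg_abs_le t]

section Omega

variable (a : ℝ) (k : ℂ)

theorem omg_mul_sqrt_sub : omg a k * (((k / a) ^ 2 + 1) ^ ((1 : ℂ) / 2) - k / a) = 1 := by
  have hsq : (((k / a) ^ 2 + 1) ^ ((1 : ℂ) / 2)) ^ 2 = (k / a) ^ 2 + 1 := by
    rw [one_div]
    exact cpow_ofNat_inv_pow _ 2
  unfold omg
  linear_combination hsq

theorem omg_ne_zero : omg a k ≠ 0 :=
  left_ne_zero_of_mul_eq_one (omg_mul_sqrt_sub a k)

theorem omg_sub_inv_omg : omg a k - (omg a k)⁻¹ = 2 * k / a := by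
  rw [inv_eq_of_mul_eq_one_right (omg_mul_sqrt_sub a k), omg]
  ring

/-- For real `k` and `a > 0` this is `√(k² + a²)`, the wave number inside the well. -/
noncomputable def wellWaveNumber : ℂ :=
  a * (omg a k + (omg a k)⁻¹) / 2

variable {a}

theorem eq_mul_omg_sub_inv_omg (ha : a ≠ 0) : k = a * (omg a k - (omg a k)⁻¹) / 2 := by
  rw [omg_sub_inv_omg]
  field_simp [ofReal_ne_zero.mpr ha]

theorem wellWaveNumber_sub (ha : a ≠ 0) : wellWaveNumber a k - k = a * (omg a k)⁻¹ := by
  unfold wellWaveNumber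
  linear_combination -eq_mul_omg_sub_inv_omg k ha

theorem wellWaveNumber_sq (ha : a ≠ 0) : wellWaveNumber a k ^ 2 = k ^ 2 + a ^ 2 := by
  unfold wellWaveNumber
  linear_combination a ^ 2 * mul_inv_cancel₀ (omg_ne_zero a k) -
    (k + a * (omg a k - (omg a k)⁻¹) / 2) * eq_mul_omg_sub_inv_omg k ha

theorem wellWaveNumber_mul_one_sub_sq (ha : a ≠ 0) :
    wellWaveNumber a k * (1 - omg a k ^ 2) = -k * (1 + omg a k ^ 2) := by
  unfold wellWaveNumber
  linear_combination (1 + omg a k ^ 2) * eq_mul_omg_sub_inv_omg k ha -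
    a * omg a k * mul_inv_cancel₀ (omg_ne_zero a k)

theorem xi_eq_exp_sq (b : ℝ) : xi a b k = exp (I * wellWaveNumber a k * b) ^ 2 := by
  rw [xi, ← exp_nat_mul, wellWaveNumber, one_div]
  congr 1
  push_cast
  ring

theorem exp_mul_div_omg (ha : a ≠ 0) (b : ℝ) :
    exp (I * a * b / omg a k) = exp (I * wellWaveNumber a k * b) / exp (I * k * b) := by
  rw [← exp_sub]
  congr 1
  linear_combination (-I * b) * wellWaveNumber_sub k ha

end Omega

section RealWaveNumber

variable {a : ℝ}

theorem omg_ofReal (k : ℝ) : omg a k = ((k / a + √((k / a) ^ 2 + 1) : ℝ) : ℂ) := by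
  have hcast : ((k : ℂ) / a) ^ 2 + 1 = (((k / a) ^ 2 + 1 : ℝ) : ℂ) := by push_cast; ring
  rw [omg, hcast, show ((1 : ℂ) / 2) = ((1 / 2 : ℝ) : ℂ) by norm_num,
    ← ofReal_cpow (by positivity), ← Real.sqrt_eq_rpow]
  push_cast
  ring

theorem xi_sub_omg_pow_four_ne_zero (ha : a ≠ 0) (b : ℝ) {k : ℝ} (hk : k ≠ 0) :
    xi a b k - omg a k ^ 4 ≠ 0 := by
  set r := k / a + √((k / a) ^ 2 + 1)
  have hr : 0 < r := add_sqrt_sq_add_one_pos _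
  have hw : omg a k = r := omg_ofReal k
  have hxi : ‖xi a b k‖ = 1 := by
    rw [xi, hw]
    convert norm_exp_ofReal_mul_I (a * b * (r + 1 / r)) using 3
    push_cast
    ring
  intro h
  rw [sub_eq_zero.mp h, hw, ← ofReal_pow, norm_real, Real.norm_of_nonneg (by positivity),
    pow_eq_one_iff_of_nonneg hr.le (by norm_num)] at hxi
  apply hk
  have hk0 := eq_mul_omg_sub_inv_omg (k : ℂ) ha
  rw [hw, hxi] at hk0
  simpa using hk0

end RealWaveNumber

section Jost

variable (a b : ℝ) (k : ℂ)

noncomputable def wellWave : ℝ → ℂ :=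
  planeWave (wellWaveNumber a k) (omg a k ^ 2 * (1 - omg a k ^ 2) / (xi a b k - omg a k ^ 4))
    (xi a b k * (1 - omg a k ^ 2) / (xi a b k - omg a k ^ 4))

noncomputable def jostRight (x : ℝ) : ℂ :=
  if x ≤ -b then planeWave k (Tcoef a b k) 0 x
  else if x ≤ 0 then wellWave a b k x
  else planeWave k 1 (Rcoef a b k) x

variable {a b k}

theorem wellWave_zero (hΔ : xi a b k - omg a k ^ 4 ≠ 0) :
    wellWave a b k 0 = planeWave k 1 (Rcoef a b k) 0 := by
  rw [wellWave, planeWave_zero, planeWave_zero, Rcoef]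
  field_simp
  ring

theorem deriv_wellWave_zero (ha : a ≠ 0) (hΔ : xi a b k - omg a k ^ 4 ≠ 0) :
    deriv (wellWave a b k) 0 = deriv (planeWave k 1 (Rcoef a b k)) 0 := by
  rw [wellWave, deriv_planeWave, deriv_planeWave, planeWave_zero, planeWave_zero, Rcoef]
  linear_combination (norm := (field_simp; ring))
    (-I * (omg a k ^ 2 - xi a b k) / (xi a b k - omg a k ^ 4)) * wellWaveNumber_mul_one_sub_sq k ha

theorem wellWave_neg (ha : a ≠ 0) (hΔ : xi a b k - omg a k ^ 4 ≠ 0) :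
    wellWave a b k (-b) = planeWave k (Tcoef a b k) 0 (-b) := by
  rw [wellWave, planeWave_neg, planeWave_neg, Tcoef, exp_mul_div_omg k ha]
  rw [xi_eq_exp_sq] at hΔ ⊢
  field_simp
  ring

theorem deriv_wellWave_neg (ha : a ≠ 0) (hΔ : xi a b k - omg a k ^ 4 ≠ 0) :
    deriv (wellWave a b k) (-b) = deriv (planeWave k (Tcoef a b k) 0) (-b) := by
  rw [wellWave, deriv_planeWave, deriv_planeWave, planeWave_neg, planeWave_neg, Tcoef,
    exp_mul_div_omg k ha]
  rw [xi_eq_exp_sq] at hΔ ⊢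
  set u := exp (I * wellWaveNumber a k * b)
  linear_combination (norm := (field_simp; ring))
    (I * u * (1 - omg a k ^ 2) / (u ^ 2 - omg a k ^ 4)) * wellWaveNumber_mul_one_sub_sq k ha

theorem contDiff_one_jostRight (ha : a ≠ 0) (hb : 0 < b) (hΔ : xi a b k - omg a k ^ 4 ≠ 0) :
    ContDiff ℝ 1 (jostRight a b k) := by
  have hneg : -b < 0 := by linarith
  have hinner := contDiff_one_ite_le (contDiff_planeWave _ _ _) (contDiff_planeWave _ _ _)
    (wellWave_zero hΔ) (deriv_wellWave_zero ha hΔ)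
  refine contDiff_one_ite_le (contDiff_planeWave _ _ _) hinner ?_ ?_
  · simp [hneg.le, wellWave_neg ha hΔ]
  · rw [(ite_le_eventuallyEq_left hneg).deriv_eq, deriv_wellWave_neg ha hΔ]

theorem jostRight_eventuallyEq_planeWave (ha : a ≠ 0) {x : ℝ}
    (hx : x ∉ ({-b, 0} : Set ℝ)) :
    ∃ q A B : ℂ, jostRight a b k =ᶠ[𝓝 x] planeWave q A B ∧ q ^ 2 + Vblock a b x = k ^ 2 := by
  simp only [Set.mem_insert_iff, Set.mem_singleton_iff, not_or] at hx
  rcases lt_or_gt_of_ne hx.1 with hx₁ | hx₁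
  · exact ⟨_, _, _, ite_le_eventuallyEq_left hx₁, by simp [Vblock, hx₁.not_ge]⟩
  rcases lt_or_gt_of_ne hx.2 with hx₂ | hx₂
  · exact ⟨_, _, _, (ite_le_eventuallyEq_right hx₁).trans (ite_le_eventuallyEq_left hx₂),
      by simp [Vblock, hx₁.le, hx₂.le, wellWaveNumber_sq k ha]⟩
  · exact ⟨_, _, _, (ite_le_eventuallyEq_right hx₁).trans (ite_le_eventuallyEq_right hx₂),
      by simp [Vblock, hx₂.not_ge]⟩

theorem jostRight_of_le_neg {x : ℝ} (hx : x ≤ -b) :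
    jostRight a b k x = planeWave k (Tcoef a b k) 0 x :=
  if_pos hx

theorem jostRight_of_nonneg (hb : 0 < b) (hΔ : xi a b k - omg a k ^ 4 ≠ 0) {x : ℝ} (hx : 0 ≤ x) :
    jostRight a b k x = planeWave k 1 (Rcoef a b k) x := by
  have hx' : ¬x ≤ -b := by linarith
  rcases hx.eq_or_lt with rfl | hx
  · simp [jostRight, hx', wellWave_zero hΔ]
  · simp [jostRight, hx', hx.not_ge]

end Jost

/-- For real `k ≠ 0`, `ξ(k) − ω(k)⁴ ≠ 0`, and the block potential has a right Jost
solution exhibiting `R(k)` and `T(k)` as the right reflection and transmission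
coefficients. -/
theorem block_right_jost (a b : ℝ) (ha : 0 < a) (hb : 0 < b) (k : ℝ) (hk : k ≠ 0) :
    xi a b (k : ℂ) - omg a (k : ℂ) ^ 4 ≠ 0 ∧
    ∃ φ : ℝ → ℂ, ContDiff ℝ 1 φ ∧
      (∀ x : ℝ, x ∉ ({-b, 0} : Set ℝ) → DifferentiableAt ℝ (deriv φ) x) ∧
      (∀ x : ℝ, x ∉ ({-b, 0} : Set ℝ) →
        -(deriv (deriv φ) x) + Vblock a b x * φ x = (k : ℂ) ^ 2 * φ x) ∧
      (∀ x : ℝ, x ≤ -b →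
        φ x = Tcoef a b (k : ℂ) * Complex.exp (-Complex.I * (k : ℂ) * (x : ℂ))) ∧
      (∀ x : ℝ, 0 ≤ x →
        φ x = Complex.exp (-Complex.I * (k : ℂ) * (x : ℂ)) +
          Rcoef a b (k : ℂ) * Complex.exp (Complex.I * (k : ℂ) * (x : ℂ))) := by
  have hΔ := xi_sub_omg_pow_four_ne_zero ha.ne' b hk
  refine ⟨hΔ, jostRight a b k, contDiff_one_jostRight ha.ne' hb hΔ, fun x hx => ?_,
    fun x hx => ?_, fun x hx => ?_, fun x hx => ?_⟩
  · obtain ⟨q, A, B, hφ, -⟩ := jostRight_eventuallyEq_planeWave ha.ne' hx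
    exact differentiableAt_deriv_of_eventuallyEq_planeWave hφ
  · obtain ⟨q, A, B, hφ, hq⟩ := jostRight_eventuallyEq_planeWave ha.ne' hx
    exact schrodinger_of_eventuallyEq_planeWave hφ hq
  · simp [jostRight_of_le_neg hx, planeWave]
  · simp [jostRight_of_nonneg hb hΔ hx, planeWave]
end

section
/- Let 0 < κ < a and set σ = √(1 − (κ/a)²) > 0. Then ξ(iκ) = ω(iκ)⁴ if and only if the quantity (ab/π)·σ − (2/π)·arctan(κ/(aσ)) is a nonnegative integer. Moreover, if it equals n − 1 for an integer n, then 1 ≤ n ≤ ⌈ab/π⌉. (The points k = iκ in the upper half-plane with ξ(k) = ω(k)⁴ are the poles of the reflection and transmission coefficients, i.e. the bound states of the block potential.) -/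
open Complex

/-!
Put `θ = arcsin (κ/a)`, so that `cos θ = σ` and `arctan (κ/(aσ)) = θ`. Then
`ω(iκ) = σ + iκ/a = e^{iθ}` lies on the unit circle, hence `ω + 1/ω = 2σ`,
`ξ(iκ) = e^{2iabσ}` and `ω(iκ)⁴ = e^{4iθ}`. The pole condition is thus `2abσ ≡ 4θ (mod 2π)`, i.e.
`(ab/π)σ − (2/π)θ ∈ ℤ`. Since `0 < θ < π/2` and `σ ≤ 1`, this quantity lies in `(−1, ab/π)`,
which makes an integer value nonnegative and at most `⌈ab/π⌉ − 1`.
-/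

open scoped Real

theorem exp_ofReal_mul_I_add_one_div (θ : ℝ) :
    exp (θ * I) + 1 / exp (θ * I) = (2 * Real.cos θ : ℝ) := by
  rw [one_div, ← exp_neg, ← neg_mul]
  push_cast
  exact (two_cos (θ : ℂ)).symm

theorem exp_ofReal_mul_I_eq_iff (x y : ℝ) :
    exp (x * I) = exp (y * I) ↔ ∃ n : ℤ, x = y + n * (2 * π) := by
  rw [exp_eq_exp_iff_exists_int]
  refine exists_congr fun n => ⟨fun h => ?_, fun h => ?_⟩
  · simpa using congrArg im h
  · rw [h]; push_cast; ring

theorem omg_I_mul_ofReal {a κ : ℝ} (ha : a ≠ 0) (hκ : |κ| ≤ |a|) :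
    omg a (I * κ) = exp (Real.arcsin (κ / a) * I) := by
  have ht : |κ / a| ≤ 1 := by rwa [abs_div, div_le_one (abs_pos.mpr ha)]
  obtain ⟨ht₁, ht₂⟩ := abs_le.mp ht
  have hsqrt : ((((κ / a : ℝ) : ℂ) * I) ^ 2 + 1) ^ ((1 : ℂ) / 2)
      = Real.cos (Real.arcsin (κ / a)) := by
    have h : (((κ / a : ℝ) : ℂ) * I) ^ 2 + 1 = ((1 - (κ / a) ^ 2 : ℝ) : ℂ) := by
      push_cast; rw [mul_pow, I_sq]; ring
    rw [h, Real.cos_arcsin, Real.sqrt_eq_rpow, ofReal_cpow (by nlinarith)]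
    norm_num
  rw [omg, show I * (κ : ℂ) / a = ((κ / a : ℝ) : ℂ) * I by push_cast; ring, hsqrt, exp_mul_I,
    ← ofReal_cos, ← ofReal_sin, Real.sin_arcsin ht₁ ht₂]
  ring

theorem xi_eq_of_omg_eq_exp {a b θ : ℝ} {k : ℂ} (h : omg a k = exp (θ * I)) :
    xi a b k = exp ((2 * a * b * Real.cos θ : ℝ) * I) := by
  rw [xi, h, exp_ofReal_mul_I_add_one_div]
  push_cast
  ring_nf

noncomputable def boundStateIndex (a b κ : ℝ) : ℝ :=
  a * b / π * √(1 - (κ / a) ^ 2) - 2 / π * Real.arcsin (κ / a)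

theorem xi_I_mul_eq_omg_pow_four_iff {a b κ : ℝ} (ha : a ≠ 0) (hκ : |κ| ≤ |a|) :
    xi a b (I * κ) = omg a (I * κ) ^ 4 ↔ ∃ n : ℤ, boundStateIndex a b κ = n := by
  have homg := omg_I_mul_ofReal ha hκ
  rw [xi_eq_of_omg_eq_exp homg, homg, ← exp_nat_mul, Real.cos_arcsin,
    show ((4 : ℕ) : ℂ) * (Real.arcsin (κ / a) * I) = (4 * Real.arcsin (κ / a) : ℝ) * I by
      push_cast; ring,
    exp_ofReal_mul_I_eq_iff]
  refine exists_congr fun n => ?_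
  rw [boundStateIndex]
  generalize √(1 - (κ / a) ^ 2) = σ
  generalize Real.arcsin (κ / a) = θ
  constructor <;> intro h
  · field_simp
    linarith
  · field_simp at h
    linarith

theorem boundStateIndex_mem_Ioo {a b κ : ℝ} (hb : 0 ≤ b) (hκ0 : 0 < κ) (hκa : κ < a) :
    boundStateIndex a b κ ∈ Set.Ioo (-1) (a * b / π) := by
  have ha : 0 < a := hκ0.trans hκa
  have ht1 : κ / a < 1 := (div_lt_one ha).mpr hκa
  have hθ0 : 0 < Real.arcsin (κ / a) := Real.arcsin_pos.mpr (by positivity)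
  have hθ1 : Real.arcsin (κ / a) < π / 2 := Real.arcsin_lt_pi_div_two.mpr ht1
  have hσ1 : √(1 - (κ / a) ^ 2) ≤ 1 := Real.sqrt_le_one.mpr (by nlinarith)
  have hab : 0 ≤ a * b / π := by positivity
  rw [boundStateIndex]
  constructor
  · have : 2 / π * Real.arcsin (κ / a) < 1 := by
      rw [div_mul_eq_mul_div, div_lt_one Real.pi_pos]; linarith
    nlinarith [Real.sqrt_nonneg (1 - (κ / a) ^ 2)]
  · have : 0 < 2 / π * Real.arcsin (κ / a) := by positivity
    nlinarith

theorem exists_nat_eq_iff_exists_int_eq {x : ℝ} (hx : -1 < x) :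
    (∃ m : ℕ, x = m) ↔ ∃ n : ℤ, x = n := by
  refine ⟨fun ⟨m, hm⟩ => ⟨m, by simp [hm]⟩, fun ⟨n, hn⟩ => ?_⟩
  have : 0 ≤ n := by
    have : (-1 : ℤ) < n := by exact_mod_cast hn ▸ hx
    omega
  exact ⟨n.toNat, by rw [hn]; exact_mod_cast (Int.toNat_of_nonneg this).symm⟩

theorem one_le_and_le_ceil_of_sub_one_mem_Ioo {c : ℝ} {n : ℤ}
    (h : (n : ℝ) - 1 ∈ Set.Ioo (-1) c) :
    1 ≤ n ∧ n ≤ ⌈c⌉ := by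
  obtain ⟨h₁, h₂⟩ := h
  have hn : 0 < n := by exact_mod_cast (by linarith : (0 : ℝ) < n)
  have hc : n - 1 < ⌈c⌉ := Int.lt_ceil.mpr (by push_cast; exact h₂)
  omega

/-- For `0 < κ < a` and `σ = √(1 − (κ/a)²)`, the pole condition `ξ(iκ) = ω(iκ)⁴`
holds iff `(ab/π)σ − (2/π)·arctan(κ/(aσ))` is a nonnegative integer; moreover if it
equals `n − 1` for an integer `n`, then `1 ≤ n ≤ ⌈ab/π⌉`. -/
theorem block_bound_state_equation (a b : ℝ) (ha : 0 < a) (hb : 0 < b)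
    (κ : ℝ) (hκ0 : 0 < κ) (hκa : κ < a)
    (σ : ℝ) (hσ : σ = Real.sqrt (1 - (κ / a) ^ 2)) :
    0 < σ ∧
    (xi a b (Complex.I * (κ : ℂ)) = omg a (Complex.I * (κ : ℂ)) ^ 4 ↔
      ∃ m : ℕ, a * b / Real.pi * σ - 2 / Real.pi * Real.arctan (κ / (a * σ)) = (m : ℝ)) ∧
    (∀ n : ℤ, a * b / Real.pi * σ - 2 / Real.pi * Real.arctan (κ / (a * σ)) = (n : ℝ) - 1 →
      1 ≤ n ∧ n ≤ ⌈a * b / Real.pi⌉) := by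
  have ht : κ / a ∈ Set.Ioo (-1) 1 :=
    ⟨by linarith [div_pos hκ0 ha], (div_lt_one ha).mpr hκa⟩
  have hσpos : 0 < σ := hσ ▸ Real.sqrt_pos.mpr (by nlinarith [ht.1, ht.2])
  have harctan : Real.arctan (κ / (a * σ)) = Real.arcsin (κ / a) := by
    rw [Real.arcsin_eq_arctan ht, hσ, div_div]
  have hindex : a * b / π * σ - 2 / π * Real.arctan (κ / (a * σ)) = boundStateIndex a b κ := by
    rw [harctan, hσ, boundStateIndex]
  have hbounds := boundStateIndex_mem_Ioo hb.le hκ0 hκa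
  rw [hindex]
  refine ⟨hσpos, ?_, fun n hn => one_le_and_le_ceil_of_sub_one_mem_Ioo (hn ▸ hbounds)⟩
  rw [xi_I_mul_eq_omg_pow_four_iff ha.ne' (by rw [abs_of_pos ha, abs_of_pos hκ0]; exact hκa.le),
    exists_nat_eq_iff_exists_int_eq hbounds.1]
end

section
/- Let 0 < κ < a, set σ = √(1 − (κ/a)²), and assume (ab/π)·σ − (2/π)·arctan(κ/(aσ)) is a nonnegative integer. Let φ : ℝ → ℝ be continuously differentiable on ℝ, twice differentiable at every x ∉ {−b, 0}, satisfy −φ''(x) + V(x)φ(x) = −κ²φ(x) for all x ∉ {−b, 0}, and satisfy φ(x) = e^{−κx} for all x ≥ 0. Then φ is square-integrable on ℝ and the corresponding left norming constant satisfies c² := (∫_ℝ φ(x)² dx)^{−1} = 2κ(1 − (κ/a)²)/(2 + bκ). -/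
/-!
On each of the regions `x < -b`, `-b < x < 0`, `x > 0` the equation reads `φ'' = c φ` with a
constant `c`, and a solution of `φ'' = c φ` is determined by its Cauchy data `(φ, φ')` at an
endpoint. Starting from `φ = e^{-κx}` on `[0, ∞)`, this gives `φ x = (a/ω) cos (ωx + θ)` on the
well, where `ω = aσ` and `θ = arctan (κ/ω)`, i.e. `(ω, κ) = a (cos θ, sin θ)`. The bound-state
condition is `ωb = 2θ + mπ`; it makes the Cauchy data at `-b` equal to `(-1)^m (1, κ)`, hence
`φ x = (-1)^m e^{κ(x+b)}` on `(-∞, -b]`. Each tail then contributes `1/(2κ)` to `∫ φ²` and the well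
contributes `(a²b + 2κ)/(2ω²)`, which add up to `a²(2 + bκ)/(2κω²)`.
-/

open MeasureTheory

noncomputable def VblockR (a b : ℝ) (x : ℝ) : ℝ :=
  if -b ≤ x ∧ x ≤ 0 then -a ^ 2 else 0

open Set Filter Topology Real

theorem hasDerivAt_mul_add (ω θ x : ℝ) : HasDerivAt (fun y => ω * y + θ) ω x := by
  simpa using ((hasDerivAt_id x).const_mul ω).add_const θ

theorem deriv_eq_of_eqOn_Ici {f g : ℝ → ℝ} {g' t : ℝ} (hf : DifferentiableAt ℝ f t)
    (hg : HasDerivAt g g' t) (heq : EqOn f g (Ici t)) : deriv f t = g' :=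
  (uniqueDiffWithinAt_Ici t).eq_deriv _ hf.hasDerivAt.hasDerivWithinAt
    (hg.hasDerivWithinAt.congr_of_mem heq self_mem_Ici)

theorem hasDerivWithinAt_Iic_of_hasDerivAt_Ioo {E : Type*} [NormedAddCommGroup E]
    [NormedSpace ℝ E] {f f' : ℝ → E} {s t : ℝ} (hst : s < t) (hf : ContinuousAt f t)
    (hf' : ContinuousAt f' t) (hderiv : ∀ x ∈ Ioo s t, HasDerivAt f (f' x) x) :
    HasDerivWithinAt f (f' t) (Iic t) t := by
  have hderiv_eq : deriv f =ᶠ[𝓝[<] t] f' :=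
    eventually_of_mem (Ioo_mem_nhdsLT hst) fun x hx => (hderiv x hx).deriv
  exact hasDerivWithinAt_Iic_of_tendsto_deriv
    (fun x hx => (hderiv x hx).differentiableAt.differentiableWithinAt)
    hf.continuousWithinAt (Ioo_mem_nhdsLT hst)
    ((hf'.tendsto.mono_left nhdsWithin_le_nhds).congr' hderiv_eq.symm)

theorem eqOn_Icc_of_hasDerivAt_deriv_eq_const_mul {c s t : ℝ} {f f' g g' : ℝ → ℝ}
    (hf : ∀ x, HasDerivAt f (f' x) x) (hf' : Continuous f')
    (hf'' : ∀ x ∈ Ioo s t, HasDerivAt f' (c * f x) x)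
    (hg : ∀ x, HasDerivAt g (g' x) x) (hg' : Continuous g')
    (hg'' : ∀ x ∈ Ioo s t, HasDerivAt g' (c * g x) x)
    (ht : f t = g t) (ht' : f' t = g' t) :
    EqOn f g (Icc s t) ∧ EqOn f' g' (Icc s t) := by
  let L : ℝ × ℝ →L[ℝ] ℝ × ℝ :=
    (ContinuousLinearMap.snd ℝ ℝ ℝ).prod (c • ContinuousLinearMap.fst ℝ ℝ ℝ)
  have hcurve : ∀ {u u' : ℝ → ℝ}, (∀ x, HasDerivAt u (u' x) x) → Continuous u' →
      (∀ x ∈ Ioo s t, HasDerivAt u' (c * u x) x) →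
      ∀ x ∈ Ioc s t, HasDerivWithinAt (fun y => (u y, u' y)) (L (u x, u' x)) (Iic x) x := by
    intro u u' hu hu' hu'' x hx
    -- `u'` need not be differentiable at the initial time `t`; a left derivative suffices there.
    have hu''x : HasDerivWithinAt u' (c * u x) (Iic x) x := by
      rcases hx.2.lt_or_eq with hxt | rfl
      · exact (hu'' x ⟨hx.1, hxt⟩).hasDerivWithinAt
      · exact hasDerivWithinAt_Iic_of_hasDerivAt_Ioo (f' := fun y => c * u y) hx.1
          hu'.continuousAt (continuous_const.mul (continuous_iff_continuousAt.2
            fun y => (hu y).continuousAt)).continuousAt hu''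
    simpa [L] using (hu x).hasDerivWithinAt.prodMk hu''x
  have hcont : ∀ {u u' : ℝ → ℝ}, (∀ x, HasDerivAt u (u' x) x) → Continuous u' →
      ContinuousOn (fun y => (u y, u' y)) (Icc s t) := fun hu hu' =>
    ((continuous_iff_continuousAt.2 fun y => (hu y).continuousAt).prodMk hu').continuousOn
  have heq := ODE_solution_unique_of_mem_Icc_left (v := fun _ => L) (s := fun _ => univ)
    (fun _ _ => L.lipschitz.lipschitzOnWith) (hcont hf hf') (hcurve hf hf' hf'')
    (fun _ _ => mem_univ _) (hcont hg hg') (hcurve hg hg' hg'') (fun _ _ => mem_univ _)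
    (Prod.ext ht ht')
  exact ⟨fun x hx => congrArg Prod.fst (heq hx), fun x hx => congrArg Prod.snd (heq hx)⟩

theorem eqOn_mul_cos_of_hasDerivAt_deriv {A ω θ s t : ℝ} {f f' : ℝ → ℝ}
    (hf : ∀ x, HasDerivAt f (f' x) x) (hf' : Continuous f')
    (hf'' : ∀ x ∈ Ioo s t, HasDerivAt f' (-ω ^ 2 * f x) x)
    (ht : f t = A * cos (ω * t + θ)) (ht' : f' t = -(A * ω) * sin (ω * t + θ)) :
    EqOn f (fun x => A * cos (ω * x + θ)) (Icc s t) ∧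
      EqOn f' (fun x => -(A * ω) * sin (ω * x + θ)) (Icc s t) :=
  eqOn_Icc_of_hasDerivAt_deriv_eq_const_mul hf hf' hf''
    (fun x => ((hasDerivAt_mul_add ω θ x).cos.const_mul A).congr_deriv (by ring))
    (by fun_prop)
    (fun x _ => ((hasDerivAt_mul_add ω θ x).sin.const_mul _).congr_deriv (by ring)) ht ht'

theorem eq_mul_exp_of_hasDerivAt_deriv {κ t : ℝ} {f f' : ℝ → ℝ}
    (hf : ∀ x, HasDerivAt f (f' x) x) (hf' : Continuous f')
    (hf'' : ∀ x < t, HasDerivAt f' (κ ^ 2 * f x) x) (ht' : f' t = κ * f t) {x : ℝ}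
    (hx : x ≤ t) : f x = f t * exp (κ * (x - t)) := by
  have hg : ∀ y, HasDerivAt (fun y => f t * exp (κ * y + -κ * t))
      (κ * (f t * exp (κ * y + -κ * t))) y := fun y =>
    ((hasDerivAt_mul_add κ (-κ * t) y).exp.const_mul (f t)).congr_deriv (by ring)
  have heq := eqOn_Icc_of_hasDerivAt_deriv_eq_const_mul (c := κ ^ 2) (s := x) hf hf'
    (fun y hy => hf'' y hy.2) hg (by fun_prop)
    (fun y _ => ((hg y).const_mul κ).congr_deriv (by ring)) (by simp) (by simp [ht'])
  rw [heq.1 ⟨le_rfl, hx⟩]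
  ring_nf

theorem hasDerivAt_deriv_of_schrodinger {V : ℝ → ℝ} {S : Set ℝ} {E : ℝ} {φ : ℝ → ℝ}
    (hφ2 : ∀ x ∉ S, DifferentiableAt ℝ (deriv φ) x)
    (hφeq : ∀ x ∉ S, -(deriv (deriv φ) x) + V x * φ x = E * φ x) {x : ℝ} (hx : x ∉ S) :
    HasDerivAt (deriv φ) ((V x - E) * φ x) x := by
  have h2 : deriv (deriv φ) x = (V x - E) * φ x := by linear_combination -hφeq x hx
  exact h2 ▸ (hφ2 x hx).hasDerivAt

theorem cos_arctan_div_of_sq_add_sq {ω κ a : ℝ} (hω : 0 < ω) (ha : 0 < a)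
    (h : ω ^ 2 + κ ^ 2 = a ^ 2) :
    cos (arctan (κ / ω)) = ω / a ∧ sin (arctan (κ / ω)) = κ / a := by
  have hsqrt : √(1 + (κ / ω) ^ 2) = a / ω := by
    rw [show 1 + (κ / ω) ^ 2 = (a / ω) ^ 2 by field_simp; linarith]
    exact sqrt_sq (div_pos ha hω).le
  rw [cos_arctan, sin_arctan, hsqrt]
  constructor <;> field_simp

theorem cos_sin_neg_add_of_eq {θ y : ℝ} {m : ℕ} (h : y = 2 * θ + m * π) :
    cos (-y + θ) = (-1) ^ m * cos θ ∧ sin (-y + θ) = -((-1) ^ m * sin θ) := by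
  rw [show -y + θ = -(θ + m * π) by rw [h]; ring, cos_neg, sin_neg, cos_add_nat_mul_pi,
    sin_add_nat_mul_pi]
  exact ⟨rfl, rfl⟩

theorem integral_cos_mul_add_sq {ω : ℝ} (hω : ω ≠ 0) (θ s t : ℝ) :
    ∫ x in s..t, cos (ω * x + θ) ^ 2 =
      (t - s + (cos (ω * t + θ) * sin (ω * t + θ) - cos (ω * s + θ) * sin (ω * s + θ)) / ω) / 2 := by
  rw [intervalIntegral.integral_comp_mul_add (fun y => cos y ^ 2) hω, integral_cos_sq, smul_eq_mul]
  field_simp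
  ring

theorem integrableOn_Iic_and_integral_sq_of_eq_mul_exp {f : ℝ → ℝ} {A κ t : ℝ} (hκ : 0 < κ)
    (hf : ∀ x ≤ t, f x = A * exp (κ * (x - t))) :
    IntegrableOn (fun x => f x ^ 2) (Iic t) ∧ ∫ x in Iic t, f x ^ 2 = A ^ 2 / (2 * κ) := by
  have hsq : EqOn (fun x => f x ^ 2) (fun x => A ^ 2 * exp (-(2 * κ * t)) * exp (2 * κ * x))
      (Iic t) := fun x hx => by
    simp only [hf x hx, mul_pow, ← exp_nat_mul, mul_assoc, ← exp_add]
    ring_nf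
  refine ⟨IntegrableOn.congr_fun ((integrableOn_exp_mul_Iic (by positivity) t).const_mul _)
    hsq.symm measurableSet_Iic, ?_⟩
  rw [setIntegral_congr_fun measurableSet_Iic hsq, integral_const_mul,
    integral_exp_mul_Iic (by positivity), mul_div_assoc', mul_assoc, ← exp_add]
  simp

theorem integrableOn_Ioi_and_integral_sq_of_eq_mul_exp {f : ℝ → ℝ} {A κ t : ℝ} (hκ : 0 < κ)
    (hf : ∀ x, t ≤ x → f x = A * exp (-κ * (x - t))) :
    IntegrableOn (fun x => f x ^ 2) (Ioi t) ∧ ∫ x in Ioi t, f x ^ 2 = A ^ 2 / (2 * κ) := by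
  have hsq : EqOn (fun x => f x ^ 2) (fun x => A ^ 2 * exp (2 * κ * t) * exp (-(2 * κ) * x))
      (Ioi t) := fun x hx => by
    simp only [hf x (le_of_lt hx), mul_pow, ← exp_nat_mul, mul_assoc, ← exp_add]
    ring_nf
  have hneg : -(2 * κ) < 0 := by linarith
  refine ⟨IntegrableOn.congr_fun ((integrableOn_exp_mul_Ioi hneg t).const_mul _)
    hsq.symm measurableSet_Ioi, ?_⟩
  rw [setIntegral_congr_fun measurableSet_Ioi hsq, integral_const_mul,
    integral_exp_mul_Ioi hneg, neg_div_neg_eq, mul_div_assoc', mul_assoc, ← exp_add]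
  simp

theorem integrable_and_integral_eq_Iic_add_interval_add_Ioi {f : ℝ → ℝ} {s t : ℝ} (hst : s ≤ t)
    (hl : IntegrableOn f (Iic s)) (hm : IntervalIntegrable f volume s t)
    (hr : IntegrableOn f (Ioi t)) :
    Integrable f ∧
      ∫ x, f x = (∫ x in Iic s, f x) + (∫ x in s..t, f x) + ∫ x in Ioi t, f x := by
  have hr' : IntegrableOn f (Ioi s) := by
    rw [← Ioc_union_Ioi_eq_Ioi hst]
    exact ((intervalIntegrable_iff_integrableOn_Ioc_of_le hst).1 hm).union hr
  refine ⟨by simpa only [← integrableOn_univ, ← Iic_union_Ioi (a := s)] using hl.union hr', ?_⟩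
  rw [add_assoc, intervalIntegral.integral_interval_add_Ioi' hm hr,
    intervalIntegral.integral_Iic_add_Ioi hl hr']

theorem VblockR_of_mem_Icc {a b x : ℝ} (hx : x ∈ Icc (-b) 0) : VblockR a b x = -a ^ 2 :=
  if_pos hx

theorem VblockR_of_lt {a b x : ℝ} (hx : x < -b) : VblockR a b x = 0 :=
  if_neg fun h => hx.not_ge h.1

theorem exists_polar_of_block_quantization {a b κ σ : ℝ} {m : ℕ} (ha : 0 < a)
    (hκ : κ ^ 2 < a ^ 2) (hσ : σ = √(1 - (κ / a) ^ 2))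
    (hm : a * b / π * σ - 2 / π * arctan (κ / (a * σ)) = m) :
    ∃ ω θ : ℝ, 0 < ω ∧ ω ^ 2 + κ ^ 2 = a ^ 2 ∧ (cos θ = ω / a ∧ sin θ = κ / a) ∧
      ω * b = 2 * θ + m * π := by
  have harg : 0 < 1 - (κ / a) ^ 2 := by
    rw [sub_pos, div_pow, div_lt_one (by positivity)]
    exact hκ
  have hω : 0 < a * σ := mul_pos ha (hσ ▸ sqrt_pos.2 harg)
  have hω2 : (a * σ) ^ 2 + κ ^ 2 = a ^ 2 := by
    rw [mul_pow, hσ, sq_sqrt harg.le]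
    field_simp
    ring
  refine ⟨_, _, hω, hω2, cos_arctan_div_of_sq_add_sq hω ha hω2, ?_⟩
  field_simp at hm
  linarith

theorem hasDerivAt_deriv_of_block {a b κ : ℝ} {φ : ℝ → ℝ} (hb : 0 ≤ b)
    (hφ2 : ∀ x : ℝ, x ∉ ({-b, 0} : Set ℝ) → DifferentiableAt ℝ (deriv φ) x)
    (hφeq : ∀ x : ℝ, x ∉ ({-b, 0} : Set ℝ) →
      -(deriv (deriv φ) x) + VblockR a b x * φ x = -κ ^ 2 * φ x) :
    (∀ x ∈ Ioo (-b) 0, HasDerivAt (deriv φ) (-(a ^ 2 - κ ^ 2) * φ x) x) ∧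
      ∀ x < -b, HasDerivAt (deriv φ) (κ ^ 2 * φ x) x := by
  constructor
  · intro x hx
    have hx' : x ∉ ({-b, 0} : Set ℝ) := by simp [hx.1.ne', hx.2.ne]
    refine (hasDerivAt_deriv_of_schrodinger hφ2 hφeq hx').congr_deriv ?_
    rw [VblockR_of_mem_Icc (Ioo_subset_Icc_self hx)]
    ring
  · intro x hx
    have hx' : x ∉ ({-b, 0} : Set ℝ) := by simp [hx.ne]; linarith
    refine (hasDerivAt_deriv_of_schrodinger hφ2 hφeq hx').congr_deriv ?_
    rw [VblockR_of_lt hx]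
    ring

theorem block_well_solution {a b κ ω θ : ℝ} {m : ℕ} {f f' : ℝ → ℝ} (ha : 0 < a) (hb : 0 ≤ b)
    (hω : 0 < ω) (hω2 : ω ^ 2 + κ ^ 2 = a ^ 2) (hθ : cos θ = ω / a ∧ sin θ = κ / a)
    (hquant : ω * b = 2 * θ + m * π) (hf : ∀ x, HasDerivAt f (f' x) x) (hf' : Continuous f')
    (hf'' : ∀ x ∈ Ioo (-b) 0, HasDerivAt f' (-(a ^ 2 - κ ^ 2) * f x) x)
    (h0 : f 0 = 1) (h0' : f' 0 = -κ) :
    EqOn f (fun x => a / ω * cos (ω * x + θ)) (Icc (-b) 0) ∧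
      f (-b) ^ 2 = 1 ∧ f' (-b) = κ * f (-b) := by
  obtain ⟨hwell, hwell'⟩ := eqOn_mul_cos_of_hasDerivAt_deriv (A := a / ω) (θ := θ) hf hf'
    (fun x hx => by simpa [← hω2] using hf'' x hx)
    (by simp [h0, hθ.1]; field_simp) (by simp [h0', hθ.2]; field_simp)
  obtain ⟨hcos, hsin⟩ := cos_sin_neg_add_of_eq hquant
  have hedge : -b ∈ Icc (-b) 0 := ⟨le_rfl, neg_nonpos.2 hb⟩
  have hfb : f (-b) = (-1) ^ m := by
    simp only [hwell hedge, mul_neg, hcos, hθ.1]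
    field_simp
  refine ⟨hwell, by rw [hfb, ← pow_mul, pow_mul', neg_one_sq, one_pow], ?_⟩
  simp only [hwell' hedge, hfb, mul_neg, hsin, hθ.2]
  field_simp

theorem integral_sq_block_well {a b κ ω θ : ℝ} {m : ℕ} (ha : 0 < a) (hω : 0 < ω)
    (hθ : cos θ = ω / a ∧ sin θ = κ / a)
    (hquant : ω * b = 2 * θ + m * π) :
    ∫ x in -b..0, (a / ω * cos (ω * x + θ)) ^ 2 = (a ^ 2 * b + 2 * κ) / (2 * ω ^ 2) := by
  obtain ⟨hcos, hsin⟩ := cos_sin_neg_add_of_eq hquant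
  simp_rw [mul_pow, intervalIntegral.integral_const_mul]
  have hsign : ((-1 : ℝ) ^ m) ^ 2 = 1 := by rw [← pow_mul, pow_mul', neg_one_sq, one_pow]
  rw [integral_cos_mul_add_sq hω.ne', mul_neg, hcos, hsin, mul_zero, zero_add, hθ.1, hθ.2]
  field_simp
  linear_combination κ * hsign

/-- For a bound state `−κ²` of the block potential, the eigenfunction normalized by
`φ(x) = e^{−κx}` for `x ≥ 0` is square-integrable and the left norming constant
satisfies `c² = (∫ φ²)⁻¹ = 2κ(1 − (κ/a)²)/(2 + bκ)`. -/
theorem block_norming_constant (a b : ℝ) (ha : 0 < a) (hb : 0 < b)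
    (κ : ℝ) (hκ0 : 0 < κ) (hκa : κ < a)
    (σ : ℝ) (hσ : σ = Real.sqrt (1 - (κ / a) ^ 2))
    (hbound : ∃ m : ℕ,
      a * b / Real.pi * σ - 2 / Real.pi * Real.arctan (κ / (a * σ)) = (m : ℝ))
    (φ : ℝ → ℝ) (hφ1 : ContDiff ℝ 1 φ)
    (hφ2 : ∀ x : ℝ, x ∉ ({-b, 0} : Set ℝ) → DifferentiableAt ℝ (deriv φ) x)
    (hφeq : ∀ x : ℝ, x ∉ ({-b, 0} : Set ℝ) →
      -(deriv (deriv φ) x) + VblockR a b x * φ x = -κ ^ 2 * φ x)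
    (hφnorm : ∀ x : ℝ, 0 ≤ x → φ x = Real.exp (-κ * x)) :
    Integrable (fun x : ℝ => (φ x) ^ 2) ∧
      (∫ x : ℝ, (φ x) ^ 2)⁻¹ = 2 * κ * (1 - (κ / a) ^ 2) / (2 + b * κ) := by
  obtain ⟨m, hm⟩ := hbound
  obtain ⟨ω, θ, hω, hω2, hθ, hquant⟩ :=
    exists_polar_of_block_quantization ha (by nlinarith) hσ hm
  have hφ x : HasDerivAt φ (deriv φ x) x := (hφ1.differentiable one_ne_zero x).hasDerivAt
  have hφ' : Continuous (deriv φ) := hφ1.continuous_deriv le_rfl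
  have hφ0 : φ 0 = 1 := by simpa using hφnorm 0 le_rfl
  have hφ'0 : deriv φ 0 = -κ := by
    simpa using deriv_eq_of_eqOn_Ici (hφ 0).differentiableAt
      (((hasDerivAt_id' 0).const_mul (-κ)).exp) hφnorm
  obtain ⟨hwell, hleft⟩ := hasDerivAt_deriv_of_block hb.le hφ2 hφeq
  obtain ⟨hφwell, hφb, hφ'b⟩ :=
    block_well_solution ha hb.le hω hω2 hθ hquant hφ hφ' hwell hφ0 hφ'0
  obtain ⟨hIl, hl⟩ := integrableOn_Iic_and_integral_sq_of_eq_mul_exp hκ0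
    fun x hx => eq_mul_exp_of_hasDerivAt_deriv hφ hφ' hleft hφ'b hx
  obtain ⟨hIr, hr⟩ := integrableOn_Ioi_and_integral_sq_of_eq_mul_exp (A := 1) (t := 0) hκ0
    fun x hx => by simpa using hφnorm x hx
  have hmid : ∫ x in -b..0, φ x ^ 2 = (a ^ 2 * b + 2 * κ) / (2 * ω ^ 2) := by
    rw [← integral_sq_block_well ha hω hθ hquant]
    exact intervalIntegral.integral_congr fun x hx => by
      simp only [hφwell (uIcc_of_le (neg_nonpos.2 hb.le) ▸ hx)]
  obtain ⟨hint, hsum⟩ := integrable_and_integral_eq_Iic_add_interval_add_Ioi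
    (neg_nonpos.2 hb.le) hIl ((hφ1.continuous.pow 2).intervalIntegrable _ _) hIr
  refine ⟨hint, ?_⟩
  rw [hsum, hl, hmid, hr, hφb]
  field_simp
  linear_combination (2 * κ ^ 2 + a ^ 2 * κ * b) * hω2
end

section
/- Define g : (0, a) → ℝ by g(κ) = (ab/π)·√(1 − (κ/a)²) − (2/π)·arctan(κ/(a√(1 − (κ/a)²))). Then g is continuous and strictly decreasing, g(κ) → ab/π as κ → 0⁺, and g(κ) → −1 as κ → a⁻. Consequently, for each integer n with 1 ≤ n ≤ ⌈ab/π⌉ there is a unique κ_n ∈ (0, a) with g(κ_n) = n − 1, these are the only points of (0,a) where g takes a nonnegative integer value, and κ_1 > κ_2 > ... > κ_{⌈ab/π⌉} > 0. -/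
/-!
The function `g` is `(ab/π)·s(κ) − (2/π)·arctan(κ/(a·s(κ)))` with `s(κ) = √(1 − (κ/a)²)`
decreasing and `κ/(a·s(κ))` increasing on `[0,a)`, so `g` is strictly decreasing. It is
continuous on `(−a,a)`, so `g(0⁺) = g(0) = ab/π`, while `a·s(κ) → 0⁺` as `κ → a⁻` drives the
arctan to `π/2` and `g` to `−1`. Hence `g` is an order-reversing bijection of `(0,a)` onto
`(−1, ab/π)`, and the integers `n − 1` in that interval are exactly those with
`1 ≤ n ≤ ⌈ab/π⌉`.
-/

open Set Filter Topology Real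

section IntervalBijection

variable {α δ : Type*} [ConditionallyCompleteLinearOrder α] [DenselyOrdered α]
  [TopologicalSpace α] [OrderTopology α] [LinearOrder δ] [TopologicalSpace δ]
  [OrderClosedTopology δ] {f : α → δ} {l u : α} {A B : δ}

theorem StrictAntiOn.mapsTo_Ioo_of_tendsto (hf : StrictAntiOn f (Ioo l u))
    (hl : Tendsto f (𝓝[>] l) (𝓝 A)) (hu : Tendsto f (𝓝[<] u) (𝓝 B)) :
    MapsTo f (Ioo l u) (Ioo B A) := by
  intro x hx
  obtain ⟨y, hxy, hyu⟩ := exists_between hx.2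
  obtain ⟨z, hlz, hzx⟩ := exists_between hx.1
  have hy : y ∈ Ioo l u := ⟨hx.1.trans hxy, hyu⟩
  have hz : z ∈ Ioo l u := ⟨hlz, hzx.trans hx.2⟩
  have : NeBot (𝓝[<] u) := nhdsLT_neBot_of_exists_lt ⟨l, hx.1.trans hx.2⟩
  have : NeBot (𝓝[>] l) := nhdsGT_neBot_of_exists_gt ⟨u, hx.1.trans hx.2⟩
  have hB : B ≤ f y := le_of_tendsto hu <| by
    filter_upwards [Ioo_mem_nhdsLT hyu] with w hw
    exact (hf hy ⟨hy.1.trans hw.1, hw.2⟩ hw.1).le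
  have hA : f z ≤ A := ge_of_tendsto hl <| by
    filter_upwards [Ioo_mem_nhdsGT hlz] with w hw
    exact (hf ⟨hw.1, hw.2.trans hz.2⟩ hz hw.2).le
  exact ⟨hB.trans_lt (hf hx hy hxy), (hf hz hx hzx).trans_le hA⟩

theorem ContinuousOn.surjOn_Ioo_of_tendsto (hlu : l < u) (hf : ContinuousOn f (Ioo l u))
    (hl : Tendsto f (𝓝[>] l) (𝓝 A)) (hu : Tendsto f (𝓝[<] u) (𝓝 B)) :
    SurjOn f (Ioo l u) (Ioo B A) := by
  intro y hy
  have : NeBot (𝓝[<] u) := nhdsLT_neBot_of_exists_lt ⟨l, hlu⟩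
  have : NeBot (𝓝[>] l) := nhdsGT_neBot_of_exists_gt ⟨u, hlu⟩
  obtain ⟨x₀, hx₀y, hx₀⟩ :=
    ((hl.eventually (eventually_gt_nhds hy.2)).and (Ioo_mem_nhdsGT hlu)).exists
  obtain ⟨x₁, hx₁y, hx₁⟩ :=
    ((hu.eventually (eventually_lt_nhds hy.1)).and (Ioo_mem_nhdsLT hlu)).exists
  exact hf.surjOn_uIcc hx₀ hx₁ (mem_uIcc.2 (Or.inr ⟨hx₁y.le, hx₀y.le⟩))

theorem StrictAntiOn.bijOn_Ioo_of_tendsto (hf : StrictAntiOn f (Ioo l u)) (hlu : l < u)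
    (hc : ContinuousOn f (Ioo l u)) (hl : Tendsto f (𝓝[>] l) (𝓝 A))
    (hu : Tendsto f (𝓝[<] u) (𝓝 B)) : BijOn f (Ioo l u) (Ioo B A) :=
  ⟨hf.mapsTo_Ioo_of_tendsto hl hu, hf.injOn, hc.surjOn_Ioo_of_tendsto hlu hl hu⟩

end IntervalBijection

theorem exists_levels_of_bijOn_Ioo {α : Type*} [LinearOrder α] [Nonempty α] {f : α → ℝ}
    {s : Set α} {c : ℝ} (hbij : BijOn f s (Ioo (-1) c)) (hf : StrictAntiOn f s) :
    ∃ κs : ℤ → α,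
      (∀ n : ℤ, 1 ≤ n → n ≤ ⌈c⌉ →
        κs n ∈ s ∧ f (κs n) = (n : ℝ) - 1 ∧ ∀ κ' ∈ s, f κ' = (n : ℝ) - 1 → κ' = κs n) ∧
      (∀ κ ∈ s, (∃ m : ℕ, f κ = (m : ℝ)) → ∃ n : ℤ, 1 ≤ n ∧ n ≤ ⌈c⌉ ∧ κ = κs n) ∧
      (∀ m n : ℤ, 1 ≤ m → m < n → n ≤ ⌈c⌉ → κs n < κs m) := by
  set κs : ℤ → α := fun n => Function.invFunOn f s ((n : ℝ) - 1)
  have level : ∀ n : ℤ, 1 ≤ n → n ≤ ⌈c⌉ → κs n ∈ s ∧ f (κs n) = (n : ℝ) - 1 := by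
    intro n h1 h2
    have hmem : (n : ℝ) - 1 ∈ Ioo (-1) c :=
      ⟨by linarith [show (1 : ℝ) ≤ n by exact_mod_cast h1],
        by exact_mod_cast Int.le_ceil_iff.1 h2⟩
    exact ⟨Function.invFunOn_mem (hbij.surjOn hmem), Function.invFunOn_eq (hbij.surjOn hmem)⟩
  refine ⟨κs, fun n h1 h2 => ⟨(level n h1 h2).1, (level n h1 h2).2, ?_⟩, ?_, ?_⟩
  · intro κ' hκ' hval
    exact hbij.injOn hκ' (level n h1 h2).1 (hval.trans (level n h1 h2).2.symm)
  · rintro κ hκ ⟨m, hm⟩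
    have hle : (m : ℤ) + 1 ≤ ⌈c⌉ := Int.le_ceil_iff.2 (by simpa [hm] using (hbij.mapsTo hκ).2)
    obtain ⟨hmem, hval⟩ := level _ (by omega) hle
    exact ⟨_, by omega, hle, hbij.injOn hκ hmem (by rw [hm, hval]; push_cast; ring)⟩
  · intro m n h1 hmn h2
    obtain ⟨hm, hmval⟩ := level m h1 (hmn.le.trans h2)
    obtain ⟨hn, hnval⟩ := level n (h1.trans hmn.le) h2
    rw [← hf.lt_iff_gt hm hn, hmval, hnval, sub_lt_sub_iff_right]
    exact_mod_cast hmn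

noncomputable def blockBoundStateFn (a b κ : ℝ) : ℝ :=
  a * b / π * √(1 - (κ / a) ^ 2) - 2 / π * arctan (κ / (a * √(1 - (κ / a) ^ 2)))

section BlockPotential

variable {a : ℝ}

theorem sqrt_one_sub_div_sq_pos (ha : 0 < a) {κ : ℝ} (hκ : κ ∈ Ioo (-a) a) :
    0 < √(1 - (κ / a) ^ 2) := by
  have : |κ / a| < 1 := by rw [abs_div, abs_of_pos ha, div_lt_one ha]; exact abs_lt.2 hκ
  exact sqrt_pos.2 (by nlinarith [sq_abs (κ / a), abs_nonneg (κ / a)])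

theorem strictAntiOn_sqrt_one_sub_div_sq (ha : 0 < a) :
    StrictAntiOn (fun κ => √(1 - (κ / a) ^ 2)) (Icc 0 a) := by
  intro x hx y hy hxy
  have hxa : x / a < y / a := div_lt_div_of_pos_right hxy ha
  have hya : y / a ≤ 1 := (div_le_one ha).2 hy.2
  apply sqrt_lt_sqrt <;> nlinarith [div_nonneg hx.1 ha.le]

theorem strictMonoOn_div_mul_sqrt_one_sub_div_sq (ha : 0 < a) :
    StrictMonoOn (fun κ => κ / (a * √(1 - (κ / a) ^ 2))) (Ico 0 a) := by
  intro x hx y hy hxy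
  have hsy := sqrt_one_sub_div_sq_pos ha ⟨by linarith [hy.1], hy.2⟩
  have hs := strictAntiOn_sqrt_one_sub_div_sq ha (Ico_subset_Icc_self hx)
    (Ico_subset_Icc_self hy) hxy
  calc x / (a * √(1 - (x / a) ^ 2)) ≤ x / (a * √(1 - (y / a) ^ 2)) := by
        gcongr
        exact hx.1
    _ < y / (a * √(1 - (y / a) ^ 2)) := by gcongr

theorem strictAntiOn_blockBoundStateFn (ha : 0 < a) {b : ℝ} (hb : 0 < b) :
    StrictAntiOn (blockBoundStateFn a b) (Ico 0 a) := by
  intro x hx y hy hxy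
  have hs := strictAntiOn_sqrt_one_sub_div_sq ha (Ico_subset_Icc_self hx)
    (Ico_subset_Icc_self hy) hxy
  have harctan := arctan_strictMono (strictMonoOn_div_mul_sqrt_one_sub_div_sq ha hx hy hxy)
  unfold blockBoundStateFn
  have : 0 < a * b / π := by positivity
  have : 0 < 2 / π := by positivity
  gcongr

theorem continuousOn_blockBoundStateFn (ha : 0 < a) (b : ℝ) :
    ContinuousOn (blockBoundStateFn a b) (Ioo (-a) a) := by
  refine continuousOn_of_forall_continuousAt fun κ hκ => ?_
  have := (mul_pos ha (sqrt_one_sub_div_sq_pos ha hκ)).ne'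
  unfold blockBoundStateFn
  fun_prop (disch := assumption)

theorem tendsto_blockBoundStateFn_nhdsGT_zero (ha : 0 < a) (b : ℝ) :
    Tendsto (blockBoundStateFn a b) (𝓝[>] 0) (𝓝 (a * b / π)) := by
  have hcont := (continuousOn_blockBoundStateFn ha b).continuousAt
    (Ioo_mem_nhds (neg_neg_iff_pos.2 ha) ha)
  simpa [blockBoundStateFn] using hcont.tendsto.mono_left nhdsWithin_le_nhds

theorem tendsto_blockBoundStateFn_nhdsLT (ha : 0 < a) (b : ℝ) :
    Tendsto (blockBoundStateFn a b) (𝓝[<] a) (𝓝 (-1)) := by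
  have hsqrt : Tendsto (fun κ => √(1 - (κ / a) ^ 2)) (𝓝[<] a) (𝓝 0) := by
    have : ContinuousAt (fun κ => √(1 - (κ / a) ^ 2)) a := by fun_prop
    simpa [div_self ha.ne'] using this.tendsto.mono_left nhdsWithin_le_nhds
  have hden : Tendsto (fun κ => a * √(1 - (κ / a) ^ 2)) (𝓝[<] a) (𝓝[>] 0) := by
    refine tendsto_nhdsWithin_of_tendsto_nhds_of_eventually_within _ ?_ ?_
    · simpa using hsqrt.const_mul a
    · filter_upwards [Ioo_mem_nhdsLT (neg_lt_self ha)] with κ hκ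
      exact mul_pos ha (sqrt_one_sub_div_sq_pos ha hκ)
  have harg : Tendsto (fun κ => κ / (a * √(1 - (κ / a) ^ 2))) (𝓝[<] a) atTop := by
    simpa [div_eq_mul_inv] using (tendsto_nhdsWithin_of_tendsto_nhds tendsto_id).pos_mul_atTop
      ha (tendsto_inv_nhdsGT_zero.comp hden)
  have harctan := (tendsto_arctan_atTop.mono_right nhdsWithin_le_nhds).comp harg
  have hlim : a * b / π * 0 - 2 / π * (π / 2) = -1 := by field_simp; ring
  exact hlim ▸ (hsqrt.const_mul (a * b / π)).sub (harctan.const_mul (2 / π))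

end BlockPotential

/-- The bound-state counting function `g` of the block potential `−a²·χ_{[−b,0]}` is
continuous and strictly decreasing on `(0,a)`, tends to `ab/π` at `0⁺` and to `−1`
at `a⁻`; consequently for each integer `1 ≤ n ≤ ⌈ab/π⌉` there is a unique
`κ_n ∈ (0,a)` with `g(κ_n) = n − 1`, these are the only points of `(0,a)` where `g`
takes a nonnegative integer value, and `κ_1 > κ_2 > ... > κ_{⌈ab/π⌉} > 0`. -/
theorem block_bound_states_count (a b : ℝ) (ha : 0 < a) (hb : 0 < b)
    (g : ℝ → ℝ)
    (hg : ∀ κ : ℝ, g κ = a * b / Real.pi * Real.sqrt (1 - (κ / a) ^ 2)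
      - 2 / Real.pi * Real.arctan (κ / (a * Real.sqrt (1 - (κ / a) ^ 2)))) :
    ContinuousOn g (Ioo 0 a) ∧
    StrictAntiOn g (Ioo 0 a) ∧
    Tendsto g (nhdsWithin 0 (Ioi 0)) (nhds (a * b / Real.pi)) ∧
    Tendsto g (nhdsWithin a (Iio a)) (nhds (-1)) ∧
    ∃ κs : ℤ → ℝ,
      (∀ n : ℤ, 1 ≤ n → n ≤ ⌈a * b / Real.pi⌉ →
        κs n ∈ Ioo 0 a ∧ g (κs n) = (n : ℝ) - 1 ∧
        ∀ κ' ∈ Ioo 0 a, g κ' = (n : ℝ) - 1 → κ' = κs n) ∧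
      (∀ κ ∈ Ioo 0 a, (∃ m : ℕ, g κ = (m : ℝ)) →
        ∃ n : ℤ, 1 ≤ n ∧ n ≤ ⌈a * b / Real.pi⌉ ∧ κ = κs n) ∧
      (∀ m n : ℤ, 1 ≤ m → m < n → n ≤ ⌈a * b / Real.pi⌉ → κs n < κs m) := by
  obtain rfl : g = blockBoundStateFn a b := funext hg
  have hcont : ContinuousOn (blockBoundStateFn a b) (Ioo 0 a) :=
    (continuousOn_blockBoundStateFn ha b).mono (Ioo_subset_Ioo_left (neg_neg_iff_pos.2 ha).le)
  have hanti := (strictAntiOn_blockBoundStateFn ha hb).mono Ioo_subset_Ico_self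
  have hzero := tendsto_blockBoundStateFn_nhdsGT_zero ha b
  have hedge := tendsto_blockBoundStateFn_nhdsLT ha b
  exact ⟨hcont, hanti, hzero, hedge,
    exists_levels_of_bijOn_Ioo (hanti.bijOn_Ioo_of_tendsto ha hcont hzero hedge) hanti⟩
end

section
/- Let T₁, T̃₁, T₂, T, R, R₁, R̃₁, L₁, L̃₁, R₂ be complex numbers with T₁ ≠ 0, T̃₁ ≠ 0, T₂ ≠ 0, T ≠ 0, and suppose: (a) 1/T = (1 − R₂L₁)/(T₂T₁); (b) R/T = R₁/(T₂T₁) + R₂/(T₂T̃₁); (c) L₁T̃₁ + T₁R̃₁ = 0; (d) L₁L̃₁ = R₁R̃₁. Then R̃₁·(1 − R₂L₁)·R = −L₁·(R₂ − L̃₁). In particular, if R̃₁ ≠ 0 and 1 − R₂L₁ ≠ 0, then R = −(L₁/R̃₁)·(R₂ − L̃₁)/(1 − R₂L₁). -/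
/-!
Since `R / T = R * (1 / T)`, hypothesis (a) turns (b) into the linear relation
`(1 - R₂ L₁) R T₁' = R₁ T₁' + R₂ T₁`. Multiplying by `R₁'` and using the unitarity relations
`T₁ R₁' = -L₁ T₁'` and `R₁ R₁' = L₁ L₁'` makes `T₁'` a common factor, which cancels.
-/

namespace Fragmentation

variable {K : Type*} [Field K]

theorem reflection_relation_of_transfer_factorization {T₁ T₁' T₂ T R R₁ L₁ R₂ : K}
    (hT₁ : T₁ ≠ 0) (hT₁' : T₁' ≠ 0) (hT₂ : T₂ ≠ 0)
    (ha : 1 / T = (1 - R₂ * L₁) / (T₂ * T₁))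
    (hb : R / T = R₁ / (T₂ * T₁) + R₂ / (T₂ * T₁')) :
    (1 - R₂ * L₁) * R * T₁' = R₁ * T₁' + R₂ * T₁ := by
  rw [div_eq_mul_one_div, ha] at hb
  field_simp at hb
  linear_combination hb

theorem reflection_recursion_of_unitarity {T₁ T₁' R R₁ R₁' L₁ L₁' R₂ : K} (hT₁' : T₁' ≠ 0)
    (hR : (1 - R₂ * L₁) * R * T₁' = R₁ * T₁' + R₂ * T₁)
    (hc : L₁ * T₁' + T₁ * R₁' = 0) (hd : L₁ * L₁' = R₁ * R₁') :
    R₁' * (1 - R₂ * L₁) * R = -L₁ * (R₂ - L₁') :=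
  mul_right_cancel₀ hT₁' (by linear_combination R₁' * hR + R₂ * hc - T₁' * hd)

end Fragmentation

open Fragmentation in
theorem fragmentation_right_recursion_general
    (T₁ T₁' T₂ T R R₁ R₁' L₁ L₁' R₂ : ℂ)
    (hT₁ : T₁ ≠ 0) (hT₁' : T₁' ≠ 0) (hT₂ : T₂ ≠ 0)
    (ha : 1 / T = (1 - R₂ * L₁) / (T₂ * T₁))
    (hb : R / T = R₁ / (T₂ * T₁) + R₂ / (T₂ * T₁'))
    (hc : L₁ * T₁' + T₁ * R₁' = 0)
    (hd : L₁ * L₁' = R₁ * R₁') :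
    R₁' * (1 - R₂ * L₁) * R = -L₁ * (R₂ - L₁') ∧
    (R₁' ≠ 0 → 1 - R₂ * L₁ ≠ 0 →
      R = -(L₁ / R₁') * ((R₂ - L₁') / (1 - R₂ * L₁))) := by
  have key := reflection_recursion_of_unitarity hT₁'
    (reflection_relation_of_transfer_factorization hT₁ hT₁' hT₂ ha hb) hc hd
  refine ⟨key, fun hR₁' hD => ?_⟩
  rw [← neg_div, div_mul_div_comm, eq_div_iff (mul_ne_zero hR₁' hD)]
  linear_combination key

/-- Algebraic content of the recursion for the right reflection coefficient obtained
from potential fragmentation (layer stripping). -/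
theorem fragmentation_right_recursion
    (T₁ T₁' T₂ T R R₁ R₁' L₁ L₁' R₂ : ℂ)
    (hT₁ : T₁ ≠ 0) (hT₁' : T₁' ≠ 0) (hT₂ : T₂ ≠ 0) (hT : T ≠ 0)
    (ha : 1 / T = (1 - R₂ * L₁) / (T₂ * T₁))
    (hb : R / T = R₁ / (T₂ * T₁) + R₂ / (T₂ * T₁'))
    (hc : L₁ * T₁' + T₁ * R₁' = 0)
    (hd : L₁ * L₁' = R₁ * R₁') :
    R₁' * (1 - R₂ * L₁) * R = -L₁ * (R₂ - L₁') ∧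
    (R₁' ≠ 0 → 1 - R₂ * L₁ ≠ 0 →
      R = -(L₁ / R₁') * ((R₂ - L₁') / (1 - R₂ * L₁))) :=
  fragmentation_right_recursion_general T₁ T₁' T₂ T R R₁ R₁' L₁ L₁' R₂ hT₁ hT₁' hT₂ ha hb hc hd
end

section
/- Let k ∈ ℂ be such that ξ(k) ≠ ω(k)⁴ and ξ(k)·ω(k)⁴ ≠ 1, and define R⁰ = ω(k)²(1 − ξ(k))/(ξ(k) − ω(k)⁴) and R̃⁰ = ω(k)²(1 − ξ(k))/(ξ(k)·ω(k)⁴ − 1). Then R⁰·R̃⁰ = 1 if and only if ω(k)⁴ = 1. -/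
open Complex

theorem sq_mul_one_sub_eq {K : Type*} [CommRing K] (x e : K) :
    (x * (1 - e)) ^ 2 = (e - x ^ 2) * (e * x ^ 2 - 1) + e * (x ^ 2 - 1) ^ 2 := by
  ring

theorem div_mul_div_eq_one_iff_sq_eq_one {K : Type*} [Field K] {x e : K} (he : e ≠ 0)
    (h₁ : e ≠ x ^ 2) (h₂ : e * x ^ 2 ≠ 1) :
    x * (1 - e) / (e - x ^ 2) * (x * (1 - e) / (e * x ^ 2 - 1)) = 1 ↔ x ^ 2 = 1 := by
  rw [div_mul_div_comm, div_eq_one_iff_eq (mul_ne_zero (sub_ne_zero.2 h₁) (sub_ne_zero.2 h₂)),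
    ← sq, sq_mul_one_sub_eq, add_eq_left, mul_eq_zero, or_iff_right he, sq_eq_zero_iff,
    sub_eq_zero]

theorem block_RR_eq_one_iff_general (a b : ℝ) (k : ℂ)
    (h1 : xi a b k ≠ omg a k ^ 4) (h2 : xi a b k * omg a k ^ 4 ≠ 1)
    (R₀ R₀' : ℂ)
    (hR : R₀ = omg a k ^ 2 * (1 - xi a b k) / (xi a b k - omg a k ^ 4))
    (hR' : R₀' = omg a k ^ 2 * (1 - xi a b k) / (xi a b k * omg a k ^ 4 - 1)) :
    R₀ * R₀' = 1 ↔ omg a k ^ 4 = 1 := by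
  subst hR hR'
  rw [show omg a k ^ 4 = (omg a k ^ 2) ^ 2 by ring] at h1 h2 ⊢
  exact div_mul_div_eq_one_iff_sq_eq_one (Complex.exp_ne_zero _) h1 h2

/-- For the block reflection coefficient `R⁰` and its reflection `R̃⁰`, the product
`R⁰·R̃⁰` equals `1` iff `ω(k)⁴ = 1`. -/
theorem block_RR_eq_one_iff (a b : ℝ) (ha : 0 < a) (hb : 0 < b) (k : ℂ)
    (h1 : xi a b k ≠ omg a k ^ 4) (h2 : xi a b k * omg a k ^ 4 ≠ 1)
    (R₀ R₀' : ℂ)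
    (hR : R₀ = omg a k ^ 2 * (1 - xi a b k) / (xi a b k - omg a k ^ 4))
    (hR' : R₀' = omg a k ^ 2 * (1 - xi a b k) / (xi a b k * omg a k ^ 4 - 1)) :
    R₀ * R₀' = 1 ↔ omg a k ^ 4 = 1 :=
  block_RR_eq_one_iff_general a b k h1 h2 R₀ R₀' hR hR'
end

section
/- For every k ∈ ℂ with Im k > 0, one has ω(k)⁴ = 1 if and only if k = i·a. -/
open Complex

/-- With `w² = z² + 1` the number `ω = z + w` satisfies `ω² = 2zω + 1`, so
`ω⁴ - 1 = (ω² - 1)(ω² + 1) = 4zω(zω + 1)`; and `zω = -1` forces `ω² = -1`, hence `z = -1/ω = ω`. -/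
theorem add_pow_four_eq_one_iff_of_sq_eq {K : Type*} [Field K] [NeZero (2 : K)] {z w : K}
    (hw : w ^ 2 = z ^ 2 + 1) : (z + w) ^ 4 = 1 ↔ z = 0 ∨ z ^ 2 = -1 := by
  constructor
  · intro h
    have hsq : (z + w) ^ 2 = 2 * z * (z + w) + 1 := by linear_combination hw
    have hfactor : z * (z + w) * (z * (z + w) + 1) = 0 := by
      have h4 : (4 : K) ≠ 0 := by
        rw [show (4 : K) = 2 * 2 by norm_num]
        exact mul_ne_zero two_ne_zero two_ne_zero
      refine (mul_eq_zero.mp ?_).resolve_left h4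
      linear_combination h - ((z + w) ^ 2 + 2 * z * (z + w) + 1) * hsq
    rcases mul_eq_zero.mp hfactor with hzero | hprod
    · exact .inl (mul_eq_zero.mp hzero |>.resolve_right fun h0 => by simp [h0] at h)
    · have hsq' : (z + w) ^ 2 = -1 := by linear_combination hsq + 2 * hprod
      have hz : z = z + w := by linear_combination z * hsq' - (z + w) * hprod
      exact .inr (hz ▸ hsq')
  · rintro (rfl | hz)
    · linear_combination (w ^ 2 + 1) * hw
    · obtain rfl : w = 0 := pow_eq_zero_iff two_ne_zero |>.mp (by rw [hw, hz, neg_add_cancel])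
      linear_combination (z ^ 2 - 1) * hz

theorem Complex.sq_eq_neg_one_iff_of_im_pos {z : ℂ} (hz : 0 < z.im) : z ^ 2 = -1 ↔ z = I := by
  rw [← I_sq, sq_eq_sq_iff_eq_or_eq_neg, or_iff_left]
  rintro rfl
  norm_num at hz

/-- In the open upper half-plane, `ω(k)⁴ = 1` iff `k = i·a`. -/
theorem omg_pow_four_eq_one_iff (a : ℝ) (ha : 0 < a) (k : ℂ) (hk : 0 < k.im) :
    omg a k ^ 4 = 1 ↔ k = Complex.I * (a : ℂ) := by
  have ha0 : (a : ℂ) ≠ 0 := ofReal_ne_zero.mpr ha.ne'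
  have hz : 0 < (k / a).im := by rw [div_ofReal_im]; positivity
  rw [omg, one_div, add_pow_four_eq_one_iff_of_sq_eq (cpow_ofNat_inv_pow _ 2),
    or_iff_right (fun h => hz.ne' (by rw [h, zero_im])), sq_eq_neg_one_iff_of_im_pos hz,
    div_eq_iff ha0]
end

section
/- For every k ∈ ℂ with Im k > 0, one has ξ(k) = 1 if and only if k = i·√(a² − (πm/b)²) for some integer m with 0 ≤ m < ab/π. (These are exactly the points of the open upper half-plane at which the numerator 1 − ξ of the block reflection coefficient R⁰ = ω²(1 − ξ)/(ξ − ω⁴) vanishes.) -/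
open Complex

/-!
Write `s = ((k/a)² + 1)^{1/2}`. Then `ω·(s − k/a) = s² − (k/a)² = 1`, so `ω + 1/ω = 2s` and
`ξ = exp(2iab·s)`. Hence `ξ = 1` iff `s = πn/(ab)` for an integer `n`; a principal square root
that is real is nonnegative, so this means `n ≥ 0` and `k² = (πn/b)² − a²`. In the upper
half-plane a square is a negative real only on the imaginary axis, which forces
`k = i·√(a² − (πn/b)²)` with `a² > (πn/b)²`, i.e. `n < ab/π`.
-/

namespace Complex

lemma cpow_one_div_two_sq (z : ℂ) : (z ^ ((1 : ℂ) / 2)) ^ 2 = z := by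
  rw [one_div]
  exact cpow_ofNat_inv_pow z 2

lemma ofReal_sq_cpow_one_div_two {r : ℝ} (hr : 0 ≤ r) : ((r : ℂ) ^ 2) ^ ((1 : ℂ) / 2) = r := by
  have harg : (r : ℂ).arg = 0 := arg_ofReal_of_nonneg hr
  rw [one_div]
  exact pow_cpow_ofNat_inv (by rw [harg]; exact neg_neg_of_pos (by positivity))
    (by rw [harg]; positivity)

lemma cpow_one_div_two_eq_ofReal_iff (z : ℂ) (r : ℝ) :
    z ^ ((1 : ℂ) / 2) = r ↔ 0 ≤ r ∧ z = (r : ℂ) ^ 2 := by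
  constructor
  · intro h
    have hz : z = (r : ℂ) ^ 2 := by rw [← h, cpow_one_div_two_sq]
    have h_abs : ((|r| : ℝ) : ℂ) = r := by
      rw [← ofReal_sq_cpow_one_div_two (abs_nonneg r), ← ofReal_pow, sq_abs, ofReal_pow, ← hz, h]
    exact ⟨abs_eq_self.mp (ofReal_injective h_abs), hz⟩
  · rintro ⟨hr, rfl⟩
    exact ofReal_sq_cpow_one_div_two hr

lemma sq_eq_neg_ofReal_iff {k : ℂ} (hk : 0 < k.im) (c : ℝ) :
    k ^ 2 = -(c : ℂ) ↔ 0 < c ∧ k = I * (Real.sqrt c : ℝ) := by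
  constructor
  · intro h
    have h_re := congrArg re h
    have h_im := congrArg im h
    simp only [sq, mul_re, mul_im, neg_re, neg_im, ofReal_re, ofReal_im, neg_zero] at h_re h_im
    have hk_re : k.re = 0 := by
      have : k.re * k.im = 0 := by linarith
      exact (mul_eq_zero.mp this).resolve_right hk.ne'
    have hc : c = k.im ^ 2 := by rw [hk_re] at h_re; linarith
    refine ⟨hc ▸ pow_pos hk 2, ?_⟩
    rw [hc, Real.sqrt_sq hk.le]
    apply Complex.ext <;> simp [hk_re]
  · rintro ⟨hc, rfl⟩
    rw [mul_pow, I_sq, ← ofReal_pow, Real.sq_sqrt hc.le, neg_one_mul]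

end Complex

open Complex

lemma omg_mul_sub (a : ℝ) (k : ℂ) :
    omg a k * (((k / a) ^ 2 + 1) ^ ((1 : ℂ) / 2) - k / a) = 1 := by
  unfold omg
  linear_combination cpow_one_div_two_sq ((k / a) ^ 2 + 1)

lemma omg_add_one_div (a : ℝ) (k : ℂ) :
    omg a k + 1 / omg a k = 2 * ((k / a) ^ 2 + 1) ^ ((1 : ℂ) / 2) := by
  rw [one_div, inv_eq_of_mul_eq_one_right (omg_mul_sub a k), omg]
  ring

lemma xi_eq_exp (a b : ℝ) (k : ℂ) :
    xi a b k = exp (2 * I * a * b * ((k / a) ^ 2 + 1) ^ ((1 : ℂ) / 2)) := by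
  rw [xi, omg_add_one_div]
  congr 1
  ring

lemma xi_eq_one_iff_exists_sq {a b : ℝ} (ha : 0 < a) (hb : 0 < b) (k : ℂ) :
    xi a b k = 1 ↔ ∃ n : ℤ, 0 ≤ n ∧ k ^ 2 = -((a ^ 2 - (Real.pi * n / b) ^ 2 : ℝ) : ℂ) := by
  have ha' : (a : ℂ) ≠ 0 := ofReal_ne_zero.mpr ha.ne'
  have hb' : (b : ℂ) ≠ 0 := ofReal_ne_zero.mpr hb.ne'
  rw [xi_eq_exp, exp_eq_one_iff]
  refine exists_congr fun n => ?_
  set r : ℝ := Real.pi * n / (a * b)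
  have hr : (r : ℂ) * a * b = Real.pi * n := by simp only [r]; push_cast; field_simp
  calc 2 * I * a * b * ((k / a) ^ 2 + 1) ^ ((1 : ℂ) / 2) = n * (2 * Real.pi * I)
      ↔ ((k / a) ^ 2 + 1) ^ ((1 : ℂ) / 2) = r := by
        have hfactor : ∀ s : ℂ, 2 * I * a * b * s - n * (2 * Real.pi * I) =
            (2 * I * a * b) * (s - r) := fun s => by linear_combination (2 * I) * hr
        rw [← sub_eq_zero, hfactor, mul_eq_zero, sub_eq_zero,
          or_iff_right (by simp [ha', hb', I_ne_zero])]
    _ ↔ 0 ≤ r ∧ (k / a) ^ 2 + 1 = (r : ℂ) ^ 2 := cpow_one_div_two_eq_ofReal_iff _ _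
    _ ↔ 0 ≤ n ∧ k ^ 2 = -((a ^ 2 - (Real.pi * n / b) ^ 2 : ℝ) : ℂ) := by
        refine and_congr ?_ ?_
        · rw [le_div_iff₀ (by positivity), zero_mul, mul_nonneg_iff_of_pos_left Real.pi_pos,
            Int.cast_nonneg_iff]
        · have hsub : (k / a) ^ 2 + 1 - (r : ℂ) ^ 2 =
              (k ^ 2 - -((a ^ 2 - (Real.pi * n / b) ^ 2 : ℝ) : ℂ)) / (a : ℂ) ^ 2 := by
            simp only [r]; push_cast; field_simp; ring
          rw [← sub_eq_zero, hsub, div_eq_zero_iff, sub_eq_zero, or_iff_left (pow_ne_zero 2 ha')]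

lemma sq_sub_sq_pos_iff_lt {a b x : ℝ} (ha : 0 < a) (hb : 0 < b) (hx : 0 ≤ x) :
    0 < a ^ 2 - (Real.pi * x / b) ^ 2 ↔ x < a * b / Real.pi := by
  rw [sub_pos, pow_lt_pow_iff_left₀ (by positivity) ha.le two_ne_zero, div_lt_iff₀ hb,
    lt_div_iff₀ Real.pi_pos, mul_comm x]

/-- In the open upper half-plane, `ξ(k) = 1` iff `k = i·√(a² − (πm/b)²)` for some
integer `m` with `0 ≤ m < ab/π`. -/
theorem xi_eq_one_iff (a b : ℝ) (ha : 0 < a) (hb : 0 < b) (k : ℂ) (hk : 0 < k.im) :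
    xi a b k = 1 ↔
      ∃ m : ℤ, 0 ≤ m ∧ (m : ℝ) < a * b / Real.pi ∧
        k = Complex.I * (Real.sqrt (a ^ 2 - (Real.pi * m / b) ^ 2) : ℝ) := by
  rw [xi_eq_one_iff_exists_sq ha hb]
  refine exists_congr fun m => and_congr_right fun hm => ?_
  rw [sq_eq_neg_ofReal_iff hk, sq_sub_sq_pos_iff_lt ha hb (Int.cast_nonneg hm)]
end
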